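/- arXiv:2110.08884 — 15 statements merged into one kernel-verified Lean document; each statement's English description precedes it below -/
import Mathlib

section
/- Let E be a finite-dimensional real inner product space, (Ω, 𝓕, μ) a probability space, and ε > 0. Let G : E → Ω → E be such that ω ↦ G(a,ω) is measurable for each a ∈ E, and for all ω ∈ Ω and all a, b ∈ E one has ⟪G(a,ω) − G(b,ω), a − b⟫ ≤ −ε‖a − b‖² and ‖G(a,ω) − G(b,ω)‖ ≤ ε⁻¹‖a − b‖. Suppose there is a measurable map a⋆ : Ω → E with G(a⋆(ω), ω) = 0 for all ω and ∫ ‖a⋆(ω)‖² dμ(ω) < ∞. Then for every a ∈ E the map ω ↦ G(a,ω) is μ-integrable, there exists a unique a ∈ E such that ∫ G(a,ω) dμ(ω) = 0, and this a satisfies ‖a‖ ≤ (1 + ε⁻²) (∫ ‖a⋆(ω)‖² dμ(ω))^{1/2}. -/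
open MeasureTheory ProbabilityTheory
open scoped RealInnerProductSpace

/-! Averaging over `ω` preserves both the strong monotonicity `⟪F a - F b, a - b⟫ ≤ -ε ‖a - b‖²`
and the `ε⁻¹`-Lipschitz bound, so `F a = ∫ G a ω ∂μ` inherits them. For such an `F` the step
`a ↦ a + ε³ • F a` is a contraction, and its fixed point is the zero of `F`. Testing monotonicity
against a second zero gives uniqueness; testing it against `0` gives
`ε ‖a‖ ≤ ‖F 0‖ ≤ ε⁻¹ ∫ ‖a⋆‖ ≤ ε⁻¹ (∫ ‖a⋆‖²)^(1/2)`, using `G 0 ω = G 0 ω - G (a⋆ ω) ω`. -/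

section StronglyMonotone

variable {E : Type*} [NormedAddCommGroup E] [InnerProductSpace ℝ E] {F : E → E} {c L : ℝ}

theorem norm_add_smul_sub_add_smul_sq_le (hc : 0 ≤ c) (hL : 0 < L)
    (hmono : ∀ a b, ⟪F a - F b, a - b⟫ ≤ -c * ‖a - b‖ ^ 2)
    (hlip : ∀ a b, ‖F a - F b‖ ≤ L * ‖a - b‖) (a b : E) :
    ‖(a + (c / L ^ 2) • F a) - (b + (c / L ^ 2) • F b)‖ ^ 2
      ≤ (1 - c ^ 2 / L ^ 2) * ‖a - b‖ ^ 2 := by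
  set t := c / L ^ 2
  have ht : 0 ≤ t := by positivity
  have hsq : ‖F a - F b‖ ^ 2 ≤ L ^ 2 * ‖a - b‖ ^ 2 := by
    rw [← mul_pow]; exact pow_le_pow_left₀ (norm_nonneg _) (hlip a b) 2
  have hexpand : ‖(a + t • F a) - (b + t • F b)‖ ^ 2
      = ‖a - b‖ ^ 2 + 2 * t * ⟪F a - F b, a - b⟫ + t ^ 2 * ‖F a - F b‖ ^ 2 := by
    rw [show (a + t • F a) - (b + t • F b) = (a - b) + t • (F a - F b) by
      rw [smul_sub]; abel, norm_add_sq_real, real_inner_smul_right, real_inner_comm,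
      norm_smul, mul_pow, Real.norm_eq_abs, sq_abs]
    ring
  have htL : t * L ^ 2 = c := div_mul_cancel₀ c (by positivity)
  rw [hexpand]
  calc ‖a - b‖ ^ 2 + 2 * t * ⟪F a - F b, a - b⟫ + t ^ 2 * ‖F a - F b‖ ^ 2
      ≤ ‖a - b‖ ^ 2 + 2 * t * (-c * ‖a - b‖ ^ 2) + t ^ 2 * (L ^ 2 * ‖a - b‖ ^ 2) := by
        gcongr; exact hmono a b
    _ = (1 - c ^ 2 / L ^ 2) * ‖a - b‖ ^ 2 := by
        rw [show c ^ 2 / L ^ 2 = t * c by simp only [t]; ring, ← htL]; ring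

theorem contractingWith_add_smul (hc : 0 < c) (hL : 0 < L)
    (hmono : ∀ a b, ⟪F a - F b, a - b⟫ ≤ -c * ‖a - b‖ ^ 2)
    (hlip : ∀ a b, ‖F a - F b‖ ≤ L * ‖a - b‖) :
    ContractingWith ⟨√(1 - c ^ 2 / L ^ 2), Real.sqrt_nonneg _⟩
      (fun a => a + (c / L ^ 2) • F a) := by
  refine ⟨?_, LipschitzWith.of_dist_le_mul fun a b => ?_⟩
  · change √(1 - c ^ 2 / L ^ 2) < 1
    rw [Real.sqrt_lt' one_pos]
    have : 0 < c ^ 2 / L ^ 2 := by positivity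
    linarith
  · rw [dist_eq_norm, dist_eq_norm]
    change _ ≤ √(1 - c ^ 2 / L ^ 2) * _
    rw [← Real.sqrt_sq (norm_nonneg (a - b)),
      ← Real.sqrt_mul' _ (sq_nonneg _), ← Real.sqrt_sq (norm_nonneg _)]
    exact Real.sqrt_le_sqrt (norm_add_smul_sub_add_smul_sq_le hc.le hL hmono hlip a b)

theorem existsUnique_eq_zero_of_strongly_monotone [CompleteSpace E] (hc : 0 < c) (hL : 0 < L)
    (hmono : ∀ a b, ⟪F a - F b, a - b⟫ ≤ -c * ‖a - b‖ ^ 2)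
    (hlip : ∀ a b, ‖F a - F b‖ ≤ L * ‖a - b‖) :
    ∃! a, F a = 0 := by
  have hT := contractingWith_add_smul hc hL hmono hlip
  set a₀ := ContractingWith.fixedPoint _ hT
  have hfix : F a₀ = 0 := by
    have h := hT.fixedPoint_isFixedPt
    rw [Function.IsFixedPt, add_eq_left, smul_eq_zero] at h
    exact h.resolve_left (by positivity)
  refine ⟨a₀, hfix, fun b hb => ?_⟩
  have h := hmono b a₀
  rw [hb, hfix, sub_zero, inner_zero_left] at h
  have : ‖b - a₀‖ ^ 2 = 0 := by nlinarith [sq_nonneg ‖b - a₀‖]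
  simpa [sub_eq_zero] using this

theorem mul_norm_le_norm_apply_zero (hmono : ∀ a b, ⟪F a - F b, a - b⟫ ≤ -c * ‖a - b‖ ^ 2)
    {a : E} (ha : F a = 0) : c * ‖a‖ ≤ ‖F 0‖ := by
  rcases (norm_nonneg a).eq_or_lt with ha0 | ha0
  · rw [← ha0, mul_zero]; exact norm_nonneg _
  have h := hmono a 0
  rw [ha, zero_sub, sub_zero, inner_neg_left] at h
  refine le_of_mul_le_mul_right ?_ ha0
  nlinarith [real_inner_le_norm (F 0) a]

end StronglyMonotone

section Averaging

variable {Ω : Type*} [MeasurableSpace Ω] {μ : Measure Ω} {E : Type*} [NormedAddCommGroup E]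
  {G : E → Ω → E} {c L : ℝ}

theorem integral_le_sqrt_integral_sq [IsProbabilityMeasure μ] {X : Ω → ℝ} (hX : MemLp X 2 μ) :
    ∫ ω, X ω ∂μ ≤ √(∫ ω, X ω ^ 2 ∂μ) := by
  have h := variance_nonneg X μ
  rw [variance_eq_sub hX] at h
  exact Real.le_sqrt_of_sq_le (by simpa only [Pi.pow_apply, sub_nonneg] using h)

theorem integrable_apply_of_lipschitz_of_apply_eq_zero [IsFiniteMeasure μ]
    (hG : ∀ a, AEStronglyMeasurable (G a) μ) (hlip : ∀ ω a b, ‖G a ω - G b ω‖ ≤ L * ‖a - b‖)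
    {z : Ω → E} (hz : Integrable z μ) (hzero : ∀ ω, G (z ω) ω = 0) (a : E) :
    Integrable (G a) μ := by
  refine (((integrable_const a).sub hz).norm.const_mul L).mono' (hG a) (.of_forall fun ω => ?_)
  simpa [hzero ω] using hlip ω a (z ω)

theorem norm_integral_sub_integral_le [NormedSpace ℝ E] [IsProbabilityMeasure μ]
    (hG : ∀ a, Integrable (G a) μ) (hlip : ∀ ω a b, ‖G a ω - G b ω‖ ≤ L * ‖a - b‖) (a b : E) :
    ‖∫ ω, G a ω ∂μ - ∫ ω, G b ω ∂μ‖ ≤ L * ‖a - b‖ := by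
  rw [← integral_sub (hG a) (hG b)]
  simpa using norm_integral_le_of_norm_le_const (μ := μ) (.of_forall fun ω => hlip ω a b)

theorem norm_integral_apply_zero_le [NormedSpace ℝ E] [IsProbabilityMeasure μ] (hL : 0 ≤ L)
    (hlip : ∀ ω a b, ‖G a ω - G b ω‖ ≤ L * ‖a - b‖)
    {z : Ω → E} (hz : MemLp z 2 μ) (hzero : ∀ ω, G (z ω) ω = 0) :
    ‖∫ ω, G 0 ω ∂μ‖ ≤ L * √(∫ ω, ‖z ω‖ ^ 2 ∂μ) :=
  calc ‖∫ ω, G 0 ω ∂μ‖ ≤ ∫ ω, L * ‖z ω‖ ∂μ :=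
        norm_integral_le_of_norm_le ((hz.integrable one_le_two).norm.const_mul L)
          (.of_forall fun ω => by simpa [hzero ω] using hlip ω 0 (z ω))
    _ ≤ L * √(∫ ω, ‖z ω‖ ^ 2 ∂μ) := by
        rw [integral_const_mul]
        exact mul_le_mul_of_nonneg_left (integral_le_sqrt_integral_sq hz.norm) hL

theorem inner_integral_le_of_forall_inner_le [InnerProductSpace ℝ E] [CompleteSpace E]
    [IsProbabilityMeasure μ] {f : Ω → E} (hf : Integrable f μ) (v : E) {r : ℝ}
    (hle : ∀ ω, ⟪f ω, v⟫ ≤ r) :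
    ⟪∫ ω, f ω ∂μ, v⟫ ≤ r := by
  rw [real_inner_comm, ← integral_inner hf]
  calc ∫ ω, ⟪v, f ω⟫ ∂μ ≤ ∫ _, r ∂μ :=
        integral_mono ((innerSL ℝ v).integrable_comp hf) (integrable_const r)
          fun ω => (real_inner_comm _ _).trans_le (hle ω)
    _ = r := by simp

theorem inner_integral_sub_integral_le [InnerProductSpace ℝ E] [CompleteSpace E]
    [IsProbabilityMeasure μ] (hG : ∀ a, Integrable (G a) μ)
    (hmono : ∀ ω a b, ⟪G a ω - G b ω, a - b⟫ ≤ -c * ‖a - b‖ ^ 2) (a b : E) :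
    ⟪∫ ω, G a ω ∂μ - ∫ ω, G b ω ∂μ, a - b⟫ ≤ -c * ‖a - b‖ ^ 2 := by
  rw [← integral_sub (hG a) (hG b)]
  exact inner_integral_le_of_forall_inner_le ((hG a).sub (hG b)) _ fun ω => hmono ω a b

end Averaging

/-- For a parametrized family `G : E → Ω → E` that is, uniformly in the
state `ω`, strongly monotone (with constant `ε`) and Lipschitz (with constant `ε⁻¹`) in the
action, admitting a square-integrable measurable selection `astar` of zeros, the averaged map
`a ↦ ∫ G a ω ∂μ` is well defined (each `G a ·` is integrable), has a unique zero `a`, and this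
zero satisfies `‖a‖ ≤ (1 + ε⁻²) (∫ ‖astar ω‖² ∂μ)^(1/2)`. -/
theorem stmt0
    {E : Type*} [NormedAddCommGroup E] [InnerProductSpace ℝ E] [FiniteDimensional ℝ E]
    [MeasurableSpace E] [BorelSpace E]
    {Ω : Type*} [MeasurableSpace Ω] (μ : Measure Ω) [IsProbabilityMeasure μ]
    (ε : ℝ) (hε : 0 < ε)
    (G : E → Ω → E)
    (hGmeas : ∀ a : E, Measurable (G a))
    (hmono : ∀ ω : Ω, ∀ a b : E, ⟪G a ω - G b ω, a - b⟫ ≤ -ε * ‖a - b‖ ^ 2)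
    (hlip : ∀ ω : Ω, ∀ a b : E, ‖G a ω - G b ω‖ ≤ ε⁻¹ * ‖a - b‖)
    (astar : Ω → E) (hastar : Measurable astar)
    (hzero : ∀ ω : Ω, G (astar ω) ω = 0)
    (hint : Integrable (fun ω => ‖astar ω‖ ^ 2) μ) :
    (∀ a : E, Integrable (fun ω => G a ω) μ) ∧
    (∃! a : E, ∫ ω, G a ω ∂μ = 0) ∧
    (∀ a : E, (∫ ω, G a ω ∂μ = 0) →
      ‖a‖ ≤ (1 + ε⁻¹ ^ 2) * (∫ ω, ‖astar ω‖ ^ 2 ∂μ) ^ (1/2 : ℝ)) := by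
  have hastar2 : MemLp astar 2 μ :=
    (memLp_two_iff_integrable_sq_norm hastar.aestronglyMeasurable).2 hint
  have hGint := integrable_apply_of_lipschitz_of_apply_eq_zero
    (fun a => (hGmeas a).aestronglyMeasurable) hlip (hastar2.integrable one_le_two) hzero
  have hFmono := inner_integral_sub_integral_le hGint hmono
  have hFlip := norm_integral_sub_integral_le hGint hlip
  refine ⟨hGint, existsUnique_eq_zero_of_strongly_monotone hε (inv_pos.2 hε) hFmono hFlip,
    fun a ha => ?_⟩
  have hbound := mul_norm_le_norm_apply_zero hFmono ha
  have hG0 := norm_integral_apply_zero_le (inv_pos.2 hε).le hlip hastar2 hzero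
  rw [← Real.sqrt_eq_rpow]
  calc ‖a‖ = ε⁻¹ * (ε * ‖a‖) := by field_simp
    _ ≤ ε⁻¹ * (ε⁻¹ * √(∫ ω, ‖astar ω‖ ^ 2 ∂μ)) :=
        mul_le_mul_of_nonneg_left (hbound.trans hG0) (inv_pos.2 hε).le
    _ ≤ (1 + ε⁻¹ ^ 2) * √(∫ ω, ‖astar ω‖ ^ 2 ∂μ) := by
        rw [← mul_assoc, ← sq]
        gcongr
        exact le_add_of_nonneg_left zero_le_one
end

section
/- Let E be a finite-dimensional real inner product space and W : E → ℝ differentiable. Let μ be a Borel probability measure on E such that x ↦ ‖x‖ and x ↦ W(x) are μ-integrable, and let b̄ = ∫ x dμ(x) be the barycenter of μ. Then for every a ∈ E: ∫ c(a,x) dμ(x) − ∫ c(b̄,x) dμ(x) = c(a, b̄), where c(u,x) = W(x) − W(u) + ⟪∇W(u), u − x⟫. -/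
/-! For fixed `u` the Bregman cost `c(u,x)` is `W x` plus an affine function of `x`, so
`∫ c(u,x) dμ = ∫ W dμ - W u + ⟪∇W u, u - b̄⟫`. Subtracting this at `u = b̄` from its value at
`u = a` leaves exactly `c(a, b̄)`. -/

open MeasureTheory
open scoped RealInnerProductSpace

section Bregman

variable {E : Type*} [NormedAddCommGroup E] [InnerProductSpace ℝ E] [CompleteSpace E]

noncomputable def bregmanCost (W : E → ℝ) (u x : E) : ℝ :=
  W x - W u + ⟪gradient W u, u - x⟫

variable [MeasurableSpace E] {μ : Measure E} [IsProbabilityMeasure μ]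

theorem integral_sub_add_inner_sub {W : E → ℝ} (hW : Integrable W μ)
    (hid : Integrable (fun x => x) μ) (u g : E) :
    ∫ x, (W x - W u + ⟪g, u - x⟫) ∂μ = (∫ x, W x ∂μ) - W u + ⟪g, u - ∫ x, x ∂μ⟫ := by
  have hsplit : (fun x => W x - W u + ⟪g, u - x⟫)
      = fun x => (W x - (W u - ⟪g, u⟫)) - ⟪g, x⟫ := by
    funext x
    rw [inner_sub_right]
    ring
  have hW' : Integrable (fun x => W x - (W u - ⟪g, u⟫)) μ := hW.sub (integrable_const _)
  rw [hsplit, integral_sub hW' (hid.const_inner g), integral_sub hW (integrable_const _),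
    integral_const, integral_inner hid, inner_sub_right]
  simp only [probReal_univ, one_smul]
  ring

theorem integral_bregmanCost {W : E → ℝ} (hW : Integrable W μ)
    (hid : Integrable (fun x => x) μ) (u : E) :
    ∫ x, bregmanCost W u x ∂μ = (∫ x, W x ∂μ) - W u + ⟪gradient W u, u - ∫ x, x ∂μ⟫ :=
  integral_sub_add_inner_sub hW hid u (gradient W u)

end Bregman

theorem stmt3_general
    {E : Type*} [NormedAddCommGroup E] [InnerProductSpace ℝ E] [FiniteDimensional ℝ E]
    [MeasurableSpace E] [BorelSpace E]
    (W : E → ℝ)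
    (μ : Measure E) [IsProbabilityMeasure μ]
    (hnorm : Integrable (fun x => ‖x‖) μ)
    (hWint : Integrable W μ)
    (bbar : E) (hbbar : bbar = ∫ x, x ∂μ)
    (c : E → E → ℝ)
    (hc : ∀ u x : E, c u x = W x - W u + ⟪gradient W u, u - x⟫) :
    ∀ a : E, (∫ x, c a x ∂μ) - (∫ x, c bbar x ∂μ) = c a bbar := by
  intro a
  obtain rfl : c = bregmanCost W := funext fun u => funext (hc u)
  have hid : Integrable (fun x : E => x) μ :=
    (integrable_norm_iff aestronglyMeasurable_id).mp hnorm
  rw [integral_bregmanCost hWint hid, integral_bregmanCost hWint hid, ← hbbar, bregmanCost,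
    sub_self, inner_zero_right]
  ring

/-- Let `W : E → ℝ` be differentiable on a finite-dimensional real inner
product space and let `μ` be a Borel probability measure with integrable norm and integrable
`W`, with barycenter `b̄ = ∫ x ∂μ`. Then for the Bregman cost
`c(u,x) = W x − W u + ⟪∇W u, u − x⟫` and every `a`,
`∫ c(a,x) ∂μ − ∫ c(b̄,x) ∂μ = c(a, b̄)`. -/
theorem stmt3
    {E : Type*} [NormedAddCommGroup E] [InnerProductSpace ℝ E] [FiniteDimensional ℝ E]
    [MeasurableSpace E] [BorelSpace E]
    (W : E → ℝ) (hW : Differentiable ℝ W)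
    (μ : Measure E) [IsProbabilityMeasure μ]
    (hnorm : Integrable (fun x => ‖x‖) μ)
    (hWint : Integrable W μ)
    (bbar : E) (hbbar : bbar = ∫ x, x ∂μ)
    (c : E → E → ℝ)
    (hc : ∀ u x : E, c u x = W x - W u + ⟪gradient W u, u - x⟫) :
    ∀ a : E, (∫ x, c a x ∂μ) - (∫ x, c bbar x ∂μ) = c a bbar :=
  stmt3_general W μ hnorm hWint bbar hbbar c hc
end

section
/- Let E be a finite-dimensional real inner product space, (Ω, 𝓕, μ₀) a probability space, W : E → ℝ differentiable, and g : Ω → E measurable with ‖g‖ and W∘g μ₀-integrable. Define c(u,x) = W(x) − W(u) + ⟪∇W(u), u − x⟫. Let Ξ ⊆ E satisfy the maximality condition: for every b in the closed convex hull of g(Ω) and every δ > 0 there exists u ∈ Ξ with c(u,b) < δ. Let a : Ω → E be measurable such that: (i) a(ω) ∈ Ξ for μ₀-a.e. ω; (ii) for μ₀-a.e. ω, c(a(ω), g(ω)) ≤ c(u, g(ω)) for all u ∈ Ξ; (iii) a equals μ₀-a.e. the conditional expectation of g given the σ-algebra generated by a; (iv) W∘a and ω ↦ ⟪∇W(a(ω)),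 a(ω) − g(ω)⟫ are μ₀-integrable. Then for every measurable b : Ω → E such that b equals μ₀-a.e. the conditional expectation of g given the σ-algebra generated by b, and such that W∘b and ω ↦ ⟪∇W(b(ω)), b(ω) − g(ω)⟫ are μ₀-integrable, one has ∫ W(a(ω)) dμ₀(ω) ≥ ∫ W(b(ω)) dμ₀(ω). -/
/-!
Fix a feasible `b` and `δ > 0`. By the three-point identity for the Bregman cost, the projection
property of `a` gives, for every `u ∈ Ξ`,
`W (b ω) - W (a ω) + ⟪∇W (a ω), a ω - g ω⟫ ≤ c u (b ω) + ⟪∇W u, b ω - g ω⟫`.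
Conditional Jensen puts `b` a.e. in the closed convex hull of `g(Ω)`, so maximality and
Lindelöf's property yield countably many `uₙ ∈ Ξ` such that the open sets `{c uₙ · < δ}` cover
the values of `b`. On the induced σ(b)-measurable partition, `⟪∇W uₙ, b - g⟫` integrates to zero
because `b = E[g | σ(b)]`, while `⟪∇W ∘ a, a - g⟫` integrates to zero by the pull-out property
for σ(a). Hence `∫ W ∘ b ≤ ∫ W ∘ a + δ`.
-/

open MeasureTheory Set
open scoped RealInnerProductSpace

section CondExp

variable {Ω E : Type*} [NormedAddCommGroup E] [InnerProductSpace ℝ E] [CompleteSpace E]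
  {m m₀ : MeasurableSpace Ω} {μ : Measure Ω} {b g : Ω → E}

theorem setIntegral_eq_of_ae_eq_condExp (hm : m ≤ m₀) [SigmaFinite (μ.trim hm)]
    (hb : b =ᵐ[μ] μ[g | m]) (hg : Integrable g μ) {s : Set Ω} (hs : MeasurableSet[m] s) :
    ∫ ω in s, b ω ∂μ = ∫ ω in s, g ω ∂μ :=
  (setIntegral_congr_ae (hm s hs) (hb.mono fun _ h _ => h)).trans (setIntegral_condExp hm hg hs)

theorem integral_inner_sub_eq_zero_of_ae_eq_condExp (hm : m ≤ m₀) [SigmaFinite (μ.trim hm)]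
    (hb : b =ᵐ[μ] μ[g | m]) (hg : Integrable g μ) {h : Ω → E} (hh : StronglyMeasurable[m] h)
    (hint : Integrable (fun ω => ⟪h ω, b ω - g ω⟫) μ) :
    ∫ ω, ⟪h ω, b ω - g ω⟫ ∂μ = 0 := by
  have hbi : Integrable b μ := integrable_condExp.congr hb.symm
  have hcond_sub : μ[fun ω => b ω - g ω | m] =ᵐ[μ] 0 := by
    have hbb : μ[b | m] =ᵐ[μ] b :=
      condExp_of_aestronglyMeasurable' hm
        (stronglyMeasurable_condExp.aestronglyMeasurable.congr hb.symm) hbi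
    filter_upwards [condExp_sub hbi hg m, hbb, hb] with ω h₁ h₂ h₃
    change μ[b - g | m] ω = 0
    rw [h₁, Pi.sub_apply, h₂, h₃, sub_self]
  have hpull := condExp_bilin_of_stronglyMeasurable_left (m := m) (innerSL ℝ) hh hint (hbi.sub hg)
  calc ∫ ω, ⟪h ω, b ω - g ω⟫ ∂μ = ∫ ω, μ[fun ω => ⟪h ω, b ω - g ω⟫ | m] ω ∂μ :=
        (integral_condExp hm).symm
    _ = ∫ ω, (0 : ℝ) ∂μ := by
        refine integral_congr_ae ?_
        filter_upwards [hpull, hcond_sub] with ω h₁ h₂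
        exact h₁.trans (by simp [h₂])
    _ = 0 := integral_zero _ _

-- The function equal to `⟪v n, b - g⟫` on each `A n` need not be integrable, so the pull-out
-- property does not apply to it; the pieces are integrated separately.
theorem integral_nonpos_of_le_inner_of_ae_eq_condExp (hm : m ≤ m₀) [SigmaFinite (μ.trim hm)]
    (hb : b =ᵐ[μ] μ[g | m]) (hg : Integrable g μ) {A : ℕ → Set Ω}
    (hA : ∀ n, MeasurableSet[m] (A n)) (hAd : Pairwise (Function.onFun Disjoint A))
    (hAcov : ∀ᵐ ω ∂μ, ω ∈ ⋃ n, A n) (v : ℕ → E) {F : Ω → ℝ} (hF : Integrable F μ)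
    (hFv : ∀ᵐ ω ∂μ, ∀ n, ω ∈ A n → F ω ≤ ⟪v n, b ω - g ω⟫) :
    ∫ ω, F ω ∂μ ≤ 0 := by
  have hbi : Integrable b μ := integrable_condExp.congr hb.symm
  have hpiece : ∀ n, ∫ ω in A n, F ω ∂μ ≤ 0 := fun n => calc
    ∫ ω in A n, F ω ∂μ ≤ ∫ ω in A n, ⟪v n, b ω - g ω⟫ ∂μ := by
        refine setIntegral_mono_ae_restrict hF.integrableOn
          ((hbi.sub hg).const_inner (v n)).integrableOn ?_
        filter_upwards [ae_restrict_of_ae hFv, ae_restrict_mem (hm _ (hA n))] with ω hω hωA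
        exact hω n hωA
    _ = ⟪v n, ∫ ω in A n, (b ω - g ω) ∂μ⟫ := integral_inner (hbi.sub hg).integrableOn (v n)
    _ = 0 := by
        rw [integral_sub hbi.integrableOn hg.integrableOn,
          setIntegral_eq_of_ae_eq_condExp hm hb hg (hA n), sub_self, inner_zero_right]
  calc ∫ ω, F ω ∂μ = ∫ ω in ⋃ n, A n, F ω ∂μ := by
        rw [Measure.restrict_eq_self_of_ae_mem hAcov]
    _ = ∑' n, ∫ ω in A n, F ω ∂μ :=
        integral_iUnion (fun n => hm _ (hA n)) hAd hF.integrableOn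
    _ ≤ 0 := tsum_nonpos hpiece

end CondExp

section Bregman

variable {E : Type*} [NormedAddCommGroup E] [InnerProductSpace ℝ E] [CompleteSpace E]
  {W : E → ℝ} {c : E → E → ℝ}

theorem measurable_gradient [MeasurableSpace E] [BorelSpace E] (W : E → ℝ) :
    Measurable (gradient W) :=
  (InnerProductSpace.toDual ℝ E).symm.continuous.measurable.comp (measurable_fderiv ℝ W)

theorem bregman_three_point (hc : ∀ u x : E, c u x = W x - W u + ⟪gradient W u, u - x⟫)
    (u x y : E) : c u y = c u x + (W y - W x) + ⟪gradient W u, x - y⟫ := by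
  rw [hc, hc, ← sub_add_sub_cancel u x y, inner_add_right]
  ring

theorem continuous_bregman (hc : ∀ u x : E, c u x = W x - W u + ⟪gradient W u, u - x⟫)
    (hW : Continuous W) (u : E) : Continuous (c u) := by
  rw [funext (hc u)]
  fun_prop

theorem integral_le_of_bregman_projection [MeasurableSpace E] [BorelSpace E]
    {Ω : Type*} [MeasurableSpace Ω] {μ : Measure Ω} [IsProbabilityMeasure μ]
    (hc : ∀ u x : E, c u x = W x - W u + ⟪gradient W u, u - x⟫)
    {g a b : Ω → E} (hg : Integrable g μ) (hb : Measurable b)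
    (hbcond : b =ᵐ[μ] μ[g | MeasurableSpace.comap b inferInstance])
    (hWb : Integrable (fun ω => W (b ω)) μ) (hWa : Integrable (fun ω => W (a ω)) μ)
    (hda : Integrable (fun ω => ⟪gradient W (a ω), a ω - g ω⟫) μ)
    {Ξ : Set E} (haproj : ∀ᵐ ω ∂μ, ∀ v ∈ Ξ, c (a ω) (g ω) ≤ c v (g ω))
    {u : ℕ → E} (hu : ∀ n, u n ∈ Ξ) {δ : ℝ} (hmeas : ∀ n, MeasurableSet {x | c (u n) x < δ})
    (hcov : ∀ᵐ ω ∂μ, b ω ∈ ⋃ n, {x | c (u n) x < δ}) :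
    ∫ ω, W (b ω) ∂μ ≤ ∫ ω, W (a ω) ∂μ - ∫ ω, ⟪gradient W (a ω), a ω - g ω⟫ ∂μ + δ := by
  set U : ℕ → Set E := fun n => {x | c (u n) x < δ}
  set A : ℕ → Set Ω := fun n => b ⁻¹' disjointed U n
  have hA : ∀ n, MeasurableSet[MeasurableSpace.comap b inferInstance] (A n) :=
    fun n => ⟨_, MeasurableSet.disjointed hmeas n, rfl⟩
  have hAd : Pairwise (Function.onFun Disjoint A) :=
    (disjoint_disjointed U).mono fun _ _ h => h.preimage b
  have hAcov : ∀ᵐ ω ∂μ, ω ∈ ⋃ n, A n := by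
    filter_upwards [hcov] with ω hω
    rwa [← iUnion_disjointed, ← mem_preimage, preimage_iUnion] at hω
  have hWba : Integrable (fun ω => W (b ω) - W (a ω)) μ := hWb.sub hWa
  have hWbad : Integrable (fun ω => W (b ω) - W (a ω) + ⟪gradient W (a ω), a ω - g ω⟫) μ :=
    hWba.add hda
  have hF : Integrable (fun ω => W (b ω) - W (a ω) + ⟪gradient W (a ω), a ω - g ω⟫ - δ) μ :=
    hWbad.sub (integrable_const δ)
  have hFv : ∀ᵐ ω ∂μ, ∀ n, ω ∈ A n → W (b ω) - W (a ω) + ⟪gradient W (a ω), a ω - g ω⟫ - δ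
      ≤ ⟪gradient W (u n), b ω - g ω⟫ := by
    filter_upwards [haproj] with ω hω n hωn
    have hlt : c (u n) (b ω) < δ := disjointed_subset U n hωn
    have hle := hω (u n) (hu n)
    rw [hc (a ω), bregman_three_point hc (u n) (b ω)] at hle
    linarith
  have key := integral_nonpos_of_le_inner_of_ae_eq_condExp hb.comap_le hbcond hg hA hAd hAcov
    (fun n => gradient W (u n)) hF hFv
  rw [integral_sub hWbad (integrable_const δ), integral_add hWba hda, integral_sub hWb hWa,
    integral_const, probReal_univ, one_smul] at key
  linarith

end Bregman

theorem stmt4_general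
    {E : Type*} [NormedAddCommGroup E] [InnerProductSpace ℝ E] [FiniteDimensional ℝ E]
    [MeasurableSpace E] [BorelSpace E]
    {Ω : Type*} [MeasurableSpace Ω] (μ₀ : Measure Ω) [IsProbabilityMeasure μ₀]
    (W : E → ℝ) (hW : Differentiable ℝ W)
    (g : Ω → E) (hg : Measurable g)
    (hgnorm : Integrable (fun ω => ‖g ω‖) μ₀)
    (c : E → E → ℝ)
    (hc : ∀ u x : E, c u x = W x - W u + ⟪gradient W u, u - x⟫)
    (Ξ : Set E)
    (hmax : ∀ b ∈ closure (convexHull ℝ (Set.range g)), ∀ δ : ℝ, 0 < δ →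
      ∃ u ∈ Ξ, c u b < δ)
    (a : Ω → E) (hameas : Measurable a)
    (haproj : ∀ᵐ ω ∂μ₀, ∀ u ∈ Ξ, c (a ω) (g ω) ≤ c u (g ω))
    (hacond : a =ᵐ[μ₀] μ₀[g | MeasurableSpace.comap a inferInstance])
    (haint₁ : Integrable (fun ω => W (a ω)) μ₀)
    (haint₂ : Integrable (fun ω => ⟪gradient W (a ω), a ω - g ω⟫) μ₀) :
    ∀ b : Ω → E, Measurable b →
      b =ᵐ[μ₀] μ₀[g | MeasurableSpace.comap b inferInstance] →
      Integrable (fun ω => W (b ω)) μ₀ →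
      Integrable (fun ω => ⟪gradient W (b ω), b ω - g ω⟫) μ₀ →
      ∫ ω, W (b ω) ∂μ₀ ≤ ∫ ω, W (a ω) ∂μ₀ := by
  intro b hb hbcond hWb _
  have hgi : Integrable g μ₀ := (integrable_norm_iff hg.aestronglyMeasurable).mp hgnorm
  have hgK : ∀ ω, g ω ∈ closure (convexHull ℝ (range g)) :=
    fun ω => subset_closure (subset_convexHull ℝ _ (mem_range_self ω))
  have hbK : ∀ᵐ ω ∂μ₀, b ω ∈ closure (convexHull ℝ (range g)) := by
    filter_upwards [hbcond, (convex_convexHull ℝ _).closure.condExp_mem hb.comap_le hgi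
      isClosed_closure (ae_of_all _ hgK)] with ω hω hωK
    rwa [hω]
  have hΞ : Ξ.Nonempty := by
    obtain ⟨ω⟩ := nonempty_of_isProbabilityMeasure μ₀
    obtain ⟨u, hu, -⟩ := hmax _ (hgK ω) 1 one_pos
    exact ⟨u, hu⟩
  have hda : ∫ ω, ⟪gradient W (a ω), a ω - g ω⟫ ∂μ₀ = 0 :=
    integral_inner_sub_eq_zero_of_ae_eq_condExp hameas.comap_le hacond hgi
      ((measurable_gradient W).comp (comap_measurable a)).stronglyMeasurable haint₂
  refine le_of_forall_pos_le_add fun δ hδ => ?_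
  have hopen : ∀ u, IsOpen {x | c u x < δ} :=
    fun u => isOpen_lt (continuous_bregman hc hW.continuous u) continuous_const
  have : Nonempty Ξ := hΞ.to_subtype
  obtain ⟨u, hu⟩ := isClosed_closure.isLindelof.indexed_countable_subcover
    (fun v : Ξ => {x | c v x < δ}) (fun v => hopen v) fun x hx => by
      obtain ⟨v, hv, hvx⟩ := hmax x hx δ hδ
      exact mem_iUnion.2 ⟨⟨v, hv⟩, hvx⟩
  have := integral_le_of_bregman_projection hc hgi hb hbcond hWb haint₁ haint₂ haproj
    (fun n => (u n).2) (fun n => (hopen (u n)).measurableSet) (hbK.mono fun _ hω => hu hω)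
  linarith

/-- **Maximality is sufficient for optimality in moment persuasion.**
Let `W : E → ℝ` be differentiable, `g : Ω → E` measurable with integrable norm and
integrable `W ∘ g`, and let `c(u,x) = W x − W u + ⟪∇W u, u − x⟫` be the Bregman cost.
Suppose `Ξ ⊆ E` is maximal over the closed convex hull of `g(Ω)` (the infimum of `c(·,b)`
over `Ξ` is `≤ 0` there), and `a : Ω → E` is a measurable policy taking values in `Ξ` a.e.,
Bregman-projecting `g(ω)` onto `Ξ` a.e., equal a.e. to the conditional expectation of `g`
given σ(a), with the relevant integrability. Then `a` is optimal: it attains at least the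
expected value of `W` of any feasible policy `b` (one with `b = E[g | σ(b)]` a.e. and the
analogous integrability). -/
theorem stmt4
    {E : Type*} [NormedAddCommGroup E] [InnerProductSpace ℝ E] [FiniteDimensional ℝ E]
    [MeasurableSpace E] [BorelSpace E]
    {Ω : Type*} [MeasurableSpace Ω] (μ₀ : Measure Ω) [IsProbabilityMeasure μ₀]
    (W : E → ℝ) (hW : Differentiable ℝ W)
    (g : Ω → E) (hg : Measurable g)
    (hgnorm : Integrable (fun ω => ‖g ω‖) μ₀)
    (hWg : Integrable (fun ω => W (g ω)) μ₀)
    (c : E → E → ℝ)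
    (hc : ∀ u x : E, c u x = W x - W u + ⟪gradient W u, u - x⟫)
    (Ξ : Set E)
    (hmax : ∀ b ∈ closure (convexHull ℝ (Set.range g)), ∀ δ : ℝ, 0 < δ →
      ∃ u ∈ Ξ, c u b < δ)
    (a : Ω → E) (hameas : Measurable a)
    (haΞ : ∀ᵐ ω ∂μ₀, a ω ∈ Ξ)
    (haproj : ∀ᵐ ω ∂μ₀, ∀ u ∈ Ξ, c (a ω) (g ω) ≤ c u (g ω))
    (hacond : a =ᵐ[μ₀] μ₀[g | MeasurableSpace.comap a inferInstance])
    (haint₁ : Integrable (fun ω => W (a ω)) μ₀)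
    (haint₂ : Integrable (fun ω => ⟪gradient W (a ω), a ω - g ω⟫) μ₀) :
    ∀ b : Ω → E, Measurable b →
      b =ᵐ[μ₀] μ₀[g | MeasurableSpace.comap b inferInstance] →
      Integrable (fun ω => W (b ω)) μ₀ →
      Integrable (fun ω => ⟪gradient W (b ω), b ω - g ω⟫) μ₀ →
      ∫ ω, W (b ω) ∂μ₀ ≤ ∫ ω, W (a ω) ∂μ₀ :=
  stmt4_general μ₀ W hW g hg hgnorm c hc Ξ hmax a hameas haproj hacond haint₁ haint₂
end

section
/- Let X and Ω be measurable spaces, μ a probability measure on Ω, T : Ω → X measurable, and c : X × Ω → ℝ measurable. Suppose there exist measurable functions ψ : X → ℝ and φ : Ω → ℝ with ψ(Tω) integrable with respect to μ and φ integrable with respect to μ, such that ψ(x) + φ(ω) ≤ c(x, ω) for all (x, ω) ∈ X × Ω, and ψ(T(ω)) + φ(ω) = c(T(ω), ω) for μ-a.e. ω. Then for every probability measure π on X × Ω whose second marginal is μ and whose first marginal is the pushforward of μ under T, and for which c is π-integrable, one has ∫ c dπ ≥ ∫ c(T(ω), ω) dμ(ω). In particular, the coupling induced by the map T (the pushforward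 of μ under ω ↦ (T(ω), ω)) minimizes the total cost among all couplings with these marginals. -/
open MeasureTheory

/-!
Weak Kantorovich duality: for any coupling `π` of `ν` and `μ`, integrating `ψ x + φ ω ≤ c (x, ω)`
against `π` gives `∫ ψ dν + ∫ φ dμ ≤ ∫ c dπ`, since the integral of `ψ ∘ fst` (resp. `φ ∘ snd`) only
depends on the marginal. With `ν = T₊μ`, the left side is `∫ (ψ ∘ T + φ) dμ`, which equals
`∫ c (T ω, ω) dμ` by the a.e. equality along the graph of `T`.
-/

theorem integral_add_integral_le_integral_of_map_fst_of_map_snd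
    {X Ω : Type*} [MeasurableSpace X] [MeasurableSpace Ω]
    {π : Measure (X × Ω)} {ν : Measure X} {μ : Measure Ω}
    (hfst : π.map Prod.fst = ν) (hsnd : π.map Prod.snd = μ)
    {ψ : X → ℝ} {φ : Ω → ℝ} {c : X × Ω → ℝ}
    (hψ : Integrable ψ ν) (hφ : Integrable φ μ) (hc : Integrable c π)
    (hle : ∀ x ω, ψ x + φ ω ≤ c (x, ω)) :
    ∫ x, ψ x ∂ν + ∫ ω, φ ω ∂μ ≤ ∫ p, c p ∂π := by
  subst hfst hsnd
  have hψπ : Integrable (fun p : X × Ω => ψ p.1) π :=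
    hψ.comp_aemeasurable measurable_fst.aemeasurable
  have hφπ : Integrable (fun p : X × Ω => φ p.2) π :=
    hφ.comp_aemeasurable measurable_snd.aemeasurable
  calc ∫ x, ψ x ∂π.map Prod.fst + ∫ ω, φ ω ∂π.map Prod.snd
      = ∫ p, (ψ p.1 + φ p.2) ∂π := by
        rw [integral_add hψπ hφπ, integral_map measurable_fst.aemeasurable hψ.1,
          integral_map measurable_snd.aemeasurable hφ.1]
    _ ≤ ∫ p, c p ∂π := integral_mono (hψπ.add hφπ) hc fun p => hle p.1 p.2

theorem stmt6_general
    {X Ω : Type*} [MeasurableSpace X] [MeasurableSpace Ω]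
    (μ : Measure Ω)
    (T : Ω → X) (hT : Measurable T)
    (c : X × Ω → ℝ) (hc : Measurable c)
    (ψ : X → ℝ) (φ : Ω → ℝ) (hψ : Measurable ψ)
    (hψint : Integrable (fun ω => ψ (T ω)) μ)
    (hφint : Integrable φ μ)
    (hle : ∀ (x : X) (ω : Ω), ψ x + φ ω ≤ c (x, ω))
    (heq : ∀ᵐ ω ∂μ, ψ (T ω) + φ ω = c (T ω, ω)) :
    (∀ π : Measure (X × Ω), IsProbabilityMeasure π →
      π.map Prod.snd = μ → π.map Prod.fst = μ.map T →
      Integrable c π →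
      ∫ ω, c (T ω, ω) ∂μ ≤ ∫ p, c p ∂π) ∧
    ((μ.map (fun ω => (T ω, ω))).map Prod.snd = μ ∧
     (μ.map (fun ω => (T ω, ω))).map Prod.fst = μ.map T ∧
     ∫ p, c p ∂(μ.map (fun ω => (T ω, ω))) = ∫ ω, c (T ω, ω) ∂μ) := by
  refine ⟨fun π _ hsnd hfst hcπ => ?_, ?_, Measure.fst_map_prodMk measurable_id, ?_⟩
  · have hψν : Integrable ψ (μ.map T) :=
      (integrable_map_measure hψ.aestronglyMeasurable hT.aemeasurable).2 hψint
    calc ∫ ω, c (T ω, ω) ∂μ = ∫ ω, ψ (T ω) ∂μ + ∫ ω, φ ω ∂μ := by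
          rw [← integral_add hψint hφint]
          exact integral_congr_ae (heq.mono fun ω h => h.symm)
      _ = ∫ x, ψ x ∂μ.map T + ∫ ω, φ ω ∂μ := by
          rw [integral_map hT.aemeasurable hψ.aestronglyMeasurable]
      _ ≤ ∫ p, c p ∂π :=
          integral_add_integral_le_integral_of_map_fst_of_map_snd hfst hsnd hψν hφint hcπ hle
  · exact (Measure.snd_map_prodMk hT).trans Measure.map_id'
  · exact integral_map (hT.prodMk measurable_id).aemeasurable hc.aestronglyMeasurable

/-- **The policy map solves the Monge/Kantorovich problem.**
Suppose dual potentials `ψ : X → ℝ`, `φ : Ω → ℝ` satisfy `ψ x + φ ω ≤ c (x, ω)` everywhere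
with equality `μ`-a.e. along the graph of `T`. Then every coupling `π` on `X × Ω` with
second marginal `μ` and first marginal the pushforward of `μ` under `T`, for which `c` is
`π`-integrable, has total cost at least `∫ c (T ω, ω) ∂μ`; and the coupling induced by `T`
attains exactly this cost. -/
theorem stmt6
    {X Ω : Type*} [MeasurableSpace X] [MeasurableSpace Ω]
    (μ : Measure Ω) [IsProbabilityMeasure μ]
    (T : Ω → X) (hT : Measurable T)
    (c : X × Ω → ℝ) (hc : Measurable c)
    (ψ : X → ℝ) (φ : Ω → ℝ) (hψ : Measurable ψ) (hφ : Measurable φ)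
    (hψint : Integrable (fun ω => ψ (T ω)) μ)
    (hφint : Integrable φ μ)
    (hle : ∀ (x : X) (ω : Ω), ψ x + φ ω ≤ c (x, ω))
    (heq : ∀ᵐ ω ∂μ, ψ (T ω) + φ ω = c (T ω, ω)) :
    (∀ π : Measure (X × Ω), IsProbabilityMeasure π →
      π.map Prod.snd = μ → π.map Prod.fst = μ.map T →
      Integrable c π →
      ∫ ω, c (T ω, ω) ∂μ ≤ ∫ p, c p ∂π) ∧
    ((μ.map (fun ω => (T ω, ω))).map Prod.snd = μ ∧
     (μ.map (fun ω => (T ω, ω))).map Prod.fst = μ.map T ∧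
     ∫ p, c p ∂(μ.map (fun ω => (T ω, ω))) = ∫ ω, c (T ω, ω) ∂μ) :=
  stmt6_general μ T hT c hc ψ φ hψ hψint hφint hle heq
end

section
/- Let E be a finite-dimensional real inner product space of dimension M, and let T : E → E be an invertible self-adjoint linear operator. Let V ⊆ E be the sum of the eigenspaces of T corresponding to positive eigenvalues, let ν = dim V, let P be the orthogonal projection onto V, and Q the orthogonal projection onto V^⊥. Suppose Ξ ⊆ E satisfies ⟪a − b, T(a − b)⟫ ≥ 0 for all a, b ∈ Ξ. Then there exists L ≥ 0 (depending only on T) such that ‖Q(a) − Q(b)‖ ≤ L‖P(a) − P(b)‖ for all a, b ∈ Ξ; consequently there exists a function f : P(Ξ) → V^⊥, Lipschitz with constant L, such that a = P(a) + f(P(a)) for every a ∈ Ξ, i.e. Ξ is contained in the graph of an L-Lipschitz function over the ν-dimensional subspace V. -/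
/-!
Diagonalize `T` in an orthonormal eigenbasis `bᵢ` with eigenvalues `μᵢ`, all nonzero because
`T` is injective. The eigenvectors with `μᵢ > 0` lie in `V` and the others in `Vᗮ`, so with
`C = max |μᵢ|` and `β = min |μᵢ|`,
`⟪d, T d⟫ = ∑ μᵢ ⟪bᵢ, d⟫² ≤ C ‖P d‖² - β ‖Q d‖²`.
Hence `0 ≤ ⟪d, T d⟫` forces `‖Q d‖ ≤ √(C / β) ‖P d‖`. Taking `d = a - b` for `a, b ∈ Ξ` shows that
`Q a` is a Lipschitz function of `P a` on `Ξ`, and `a = P a + Q a`.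
-/

open scoped RealInnerProductSpace NNReal
open Module.End

lemma Finite.exists_pos_le_abs {ι : Type*} [Finite ι] (μ : ι → ℝ) (hμ : ∀ i, μ i ≠ 0) :
    ∃ β : ℝ≥0, 0 < β ∧ ∀ i, β ≤ |μ i| := by
  have : Nonempty {x : ℝ≥0 // 0 < x} := ⟨⟨1, one_pos⟩⟩
  obtain ⟨⟨β, hβ⟩, h⟩ :=
    Finite.exists_ge fun i ↦ (⟨‖μ i‖₊, nnnorm_pos.2 (hμ i)⟩ : {x : ℝ≥0 // 0 < x})
  exact ⟨β, hβ, h⟩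

lemma mul_sum_sq_filter_nonpos_le {ι : Type*} [Fintype ι] {μ c : ι → ℝ} {C β : ℝ}
    (hC : ∀ i, μ i ≤ C) (hβ : ∀ i, ¬ 0 < μ i → μ i ≤ -β) (h : 0 ≤ ∑ i, μ i * c i ^ 2) :
    β * ∑ i with ¬ 0 < μ i, c i ^ 2 ≤ C * ∑ i with 0 < μ i, c i ^ 2 := by
  have hpos : ∑ i with 0 < μ i, μ i * c i ^ 2 ≤ C * ∑ i with 0 < μ i, c i ^ 2 := by
    rw [Finset.mul_sum]
    exact Finset.sum_le_sum fun i _ ↦ mul_le_mul_of_nonneg_right (hC i) (sq_nonneg _)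
  have hneg : ∑ i with ¬ 0 < μ i, μ i * c i ^ 2 ≤ -β * ∑ i with ¬ 0 < μ i, c i ^ 2 := by
    rw [Finset.mul_sum]
    exact Finset.sum_le_sum fun i hi ↦
      mul_le_mul_of_nonneg_right (hβ i (Finset.mem_filter.1 hi).2) (sq_nonneg _)
  rw [← Finset.sum_filter_add_sum_filter_not _ (0 < μ ·)] at h
  linarith

namespace OrthonormalBasis

variable {ι E : Type*} [Fintype ι] [NormedAddCommGroup E] [InnerProductSpace ℝ E]

lemma norm_starProjection_sq (b : OrthonormalBasis ι ℝ E) (K : Submodule ℝ E)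
    [K.HasOrthogonalProjection] (s : ι → Prop) [DecidablePred s] (hK : ∀ i, s i → b i ∈ K)
    (hKperp : ∀ i, ¬ s i → b i ∈ Kᗮ) (x : E) :
    ‖K.starProjection x‖ ^ 2 = ∑ i with s i, ⟪b i, x⟫ ^ 2 := by
  rw [← b.sum_sq_inner_right, Finset.sum_filter]
  refine Finset.sum_congr rfl fun i _ ↦ ?_
  rw [← K.inner_starProjection_left_eq_right]
  split_ifs with hi
  · rw [K.starProjection_eq_self_iff.2 (hK i hi)]
  · rw [K.starProjection_apply_eq_zero_iff.2 (hKperp i hi), inner_zero_left, sq, zero_mul]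

end OrthonormalBasis

def LinearMap.positiveSpectralSubspace {E : Type*} [AddCommGroup E] [Module ℝ E]
    (T : E →ₗ[ℝ] E) : Submodule ℝ E :=
  ⨆ (μ : ℝ) (_ : 0 < μ), eigenspace T μ

namespace LinearMap.IsSymmetric

variable {E : Type*} [NormedAddCommGroup E] [InnerProductSpace ℝ E] {T : E →ₗ[ℝ] E}

lemma eigenspace_le_orthogonal_iSup_eigenspace (hT : T.IsSymmetric) {p : ℝ → Prop} {μ : ℝ}
    (hμ : ¬ p μ) : eigenspace T μ ≤ (⨆ (ν : ℝ) (_ : p ν), eigenspace T ν)ᗮ := by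
  refine (Submodule.le_orthogonal_orthogonal _).trans (Submodule.orthogonal_le ?_)
  refine iSup₂_le fun ν hν x hx ↦ (Submodule.mem_orthogonal _ _).2 fun y hy ↦ ?_
  exact hT.orthogonalFamily_eigenspaces (fun h ↦ hμ (by rwa [h])) ⟨y, hy⟩ ⟨x, hx⟩

variable [FiniteDimensional ℝ E] {n : ℕ}

lemma inner_apply_self_eq_sum (hT : T.IsSymmetric) (hn : Module.finrank ℝ E = n) (x : E) :
    ⟪x, T x⟫ = ∑ i, hT.eigenvalues hn i * ⟪hT.eigenvectorBasis hn i, x⟫ ^ 2 := by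
  rw [← (hT.eigenvectorBasis hn).sum_inner_mul_inner]
  refine Finset.sum_congr rfl fun i _ ↦ ?_
  rw [← hT, apply_eigenvectorBasis, RCLike.ofReal_real_eq_id, id_eq, real_inner_smul_left,
    real_inner_comm]
  ring

lemma eigenvalues_ne_zero (hT : T.IsSymmetric) (hn : Module.finrank ℝ E = n)
    (hinj : Function.Injective T) (i : Fin n) : hT.eigenvalues hn i ≠ 0 := by
  intro h
  have hv := hT.hasEigenvector_eigenvectorBasis hn i
  rw [h, hasEigenvector_iff, RCLike.ofReal_real_eq_id, id_eq, eigenspace_zero,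
    LinearMap.mem_ker] at hv
  exact hv.2 (hinj (hv.1.trans T.map_zero.symm))

lemma eigenvectorBasis_mem_positiveSpectralSubspace (hT : T.IsSymmetric)
    (hn : Module.finrank ℝ E = n) {i : Fin n} (hi : 0 < hT.eigenvalues hn i) :
    hT.eigenvectorBasis hn i ∈ T.positiveSpectralSubspace :=
  Submodule.mem_iSup_of_mem _ <| Submodule.mem_iSup_of_mem hi
    (hT.hasEigenvector_eigenvectorBasis hn i).1

lemma eigenvectorBasis_mem_orthogonal_positiveSpectralSubspace (hT : T.IsSymmetric)
    (hn : Module.finrank ℝ E = n) {i : Fin n} (hi : ¬ 0 < hT.eigenvalues hn i) :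
    hT.eigenvectorBasis hn i ∈ T.positiveSpectralSubspaceᗮ :=
  hT.eigenspace_le_orthogonal_iSup_eigenspace hi (hT.hasEigenvector_eigenvectorBasis hn i).1

theorem exists_norm_starProjection_orthogonal_le (hT : T.IsSymmetric)
    (hinj : Function.Injective T) :
    ∃ L : ℝ≥0, ∀ x, 0 ≤ ⟪x, T x⟫ →
      ‖T.positiveSpectralSubspaceᗮ.starProjection x‖ ≤
        L * ‖T.positiveSpectralSubspace.starProjection x‖ := by
  set V := T.positiveSpectralSubspace
  set b := hT.eigenvectorBasis rfl
  set μ := hT.eigenvalues rfl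
  obtain ⟨C, hC⟩ := Finite.exists_le fun i ↦ ‖μ i‖₊
  obtain ⟨β, hβ, hβμ⟩ := Finite.exists_pos_le_abs μ (hT.eigenvalues_ne_zero rfl hinj)
  refine ⟨NNReal.sqrt (C / β), fun x hx ↦ ?_⟩
  have hPx : ‖V.starProjection x‖ ^ 2 = ∑ i with 0 < μ i, ⟪b i, x⟫ ^ 2 :=
    b.norm_starProjection_sq V _ (fun _ ↦ hT.eigenvectorBasis_mem_positiveSpectralSubspace rfl)
      (fun _ ↦ hT.eigenvectorBasis_mem_orthogonal_positiveSpectralSubspace rfl) x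
  have hQx : ‖Vᗮ.starProjection x‖ ^ 2 = ∑ i with ¬ 0 < μ i, ⟪b i, x⟫ ^ 2 :=
    b.norm_starProjection_sq Vᗮ _
      (fun _ ↦ hT.eigenvectorBasis_mem_orthogonal_positiveSpectralSubspace rfl)
      (fun _ hi ↦ V.le_orthogonal_orthogonal
        (hT.eigenvectorBasis_mem_positiveSpectralSubspace rfl (not_not.1 hi))) x
  have h : β * ‖Vᗮ.starProjection x‖ ^ 2 ≤ C * ‖V.starProjection x‖ ^ 2 := by
    rw [hPx, hQx]
    refine mul_sum_sq_filter_nonpos_le (fun i ↦ (le_abs_self _).trans (hC i))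
      (fun i hi ↦ le_neg.2 ((hβμ i).trans_eq (abs_of_nonpos (not_lt.1 hi)))) ?_
    rwa [← inner_apply_self_eq_sum]
  rw [← sq_le_sq₀ (norm_nonneg _) (by positivity), mul_pow, ← NNReal.coe_pow,
    NNReal.sq_sqrt, NNReal.coe_div, div_mul_eq_mul_div,
    le_div_iff₀ (by exact_mod_cast hβ)]
  linarith

end LinearMap.IsSymmetric

lemma exists_lipschitzOnWith_comp_eq {α X Y : Type*} [Nonempty α] [PseudoMetricSpace X]
    [MetricSpace Y] {P : α → X} {Q : α → Y} {s : Set α} {L : ℝ≥0}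
    (h : ∀ a ∈ s, ∀ b ∈ s, dist (Q a) (Q b) ≤ L * dist (P a) (P b)) :
    ∃ f : X → Y, LipschitzOnWith L f (P '' s) ∧ ∀ a ∈ s, f (P a) = Q a := by
  have hf : ∀ a ∈ s, Q (Function.invFunOn P s (P a)) = Q a := fun a ha ↦ by
    have ha' : ∃ a' ∈ s, P a' = P a := ⟨a, ha, rfl⟩
    have := h _ (Function.invFunOn_mem ha') a ha
    rwa [Function.invFunOn_eq ha', dist_self, mul_zero, dist_le_zero] at this
  refine ⟨Q ∘ Function.invFunOn P s, LipschitzOnWith.of_dist_le_mul ?_, hf⟩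
  rintro _ ⟨a, ha, rfl⟩ _ ⟨b, hb, rfl⟩
  rw [Function.comp_apply, Function.comp_apply, hf a ha, hf b hb]
  exact h a ha b hb

/-- **W-monotone sets are graphs of Lipschitz functions.**
Let `T` be an invertible self-adjoint operator on a finite-dimensional real inner product
space `E`, `V` the sum of eigenspaces of `T` for positive eigenvalues, `P` the orthogonal
projection onto `V` and `Q` the one onto `V^⊥`. Then there is a constant `L` (depending only
on `T`) such that every set `Ξ` with `⟪a − b, T(a − b)⟫ ≥ 0` on `Ξ × Ξ` satisfies
`‖Q a − Q b‖ ≤ L ‖P a − P b‖` on `Ξ × Ξ`; consequently there is an `L`-Lipschitz function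
`f` on `P(Ξ)` with values in `V^⊥` such that `a = P a + f (P a)` for all `a ∈ Ξ`. -/
theorem stmt7
    {E : Type*} [NormedAddCommGroup E] [InnerProductSpace ℝ E] [FiniteDimensional ℝ E]
    (T : E →ₗ[ℝ] E) (hsym : T.IsSymmetric) (hinv : Function.Bijective T)
    (V : Submodule ℝ E)
    (hV : V = ⨆ (μ : ℝ) (_ : 0 < μ), Module.End.eigenspace (T : Module.End ℝ E) μ)
    (P Q : E → E)
    (hP : ∀ x : E, P x = (Submodule.orthogonalProjectionOnto V x : E))
    (hQ : ∀ x : E, Q x = (Submodule.orthogonalProjectionOnto Vᗮ x : E)) :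
    ∃ L : NNReal, ∀ Ξ : Set E,
      (∀ a ∈ Ξ, ∀ b ∈ Ξ, 0 ≤ ⟪a - b, T (a - b)⟫) →
      (∀ a ∈ Ξ, ∀ b ∈ Ξ, ‖Q a - Q b‖ ≤ (L : ℝ) * ‖P a - P b‖) ∧
      ∃ f : E → E, LipschitzOnWith L f (P '' Ξ) ∧
        (∀ x ∈ P '' Ξ, f x ∈ Vᗮ) ∧
        (∀ a ∈ Ξ, a = P a + f (P a)) := by
  replace hV : V = T.positiveSpectralSubspace := hV
  subst hV
  obtain ⟨L, hL⟩ := hsym.exists_norm_starProjection_orthogonal_le hinv.injective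
  refine ⟨L, fun Ξ hΞ ↦ ?_⟩
  have hQP : ∀ a ∈ Ξ, ∀ b ∈ Ξ, ‖Q a - Q b‖ ≤ L * ‖P a - P b‖ := fun a ha b hb ↦ by
    simpa only [hP, hQ, ← Submodule.starProjection_apply, ← map_sub] using hL _ (hΞ a ha b hb)
  obtain ⟨f, hfL, hf⟩ := exists_lipschitzOnWith_comp_eq (P := P) (Q := Q) (s := Ξ)
    (by simpa only [dist_eq_norm] using hQP)
  refine ⟨hQP, f, hfL, ?_, fun a ha ↦ ?_⟩
  · rintro _ ⟨a, ha, rfl⟩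
    rw [hf a ha, hQ]
    exact SetLike.coe_mem _
  · rw [hf a ha, hP, hQ]
    exact (Submodule.starProjection_add_starProjection_orthogonal a).symm
end

section
/- Let E be a finite-dimensional real inner product space of dimension M, let W : E → ℝ be twice continuously differentiable, let K ⊆ E be a convex set, and let a lie in the intrinsic (relative) interior of K. Suppose W(x) ≤ W(a) + ⟪∇W(a), x − a⟫ for all x ∈ K. Then the Hessian quadratic form of W at a, v ↦ D²W(a)(v, v), is nonpositive on the linear span S of {x − a : x ∈ K}; consequently dim S ≤ M − ν, where ν is the largest dimension of a linear subspace of E on which the quadratic form v ↦ D²W(a)(v, v) is positive definite. -/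
/-!
Along a line `t ↦ a + t • v` with `v` in the direction of the affine span of `K`, the relative
interiority of `a` keeps the line inside `K` for small `t`, so the one-variable function
`t ↦ W (a + t • v)` lies below its tangent at `0`; its second derivative at `0`, which is
`D²W(a)(v, v)`, is therefore nonpositive. The span `S` of `K - a` is that direction, so `S` meets
every subspace on which the Hessian is positive definite only in `0`, and the dimension bound is
the Grassmann formula.
-/

open scoped RealInnerProductSpace
open Filter Topology

theorem iteratedDeriv_comp_add_smul {E F : Type*} [NormedAddCommGroup E] [NormedSpace ℝ E]
    [NormedAddCommGroup F] [NormedSpace ℝ F] {n : ℕ} {W : E → F} (hW : ContDiff ℝ n W)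
    (a v : E) (t : ℝ) :
    iteratedDeriv n (fun s : ℝ => W (a + s • v)) t =
      iteratedFDeriv ℝ n W (a + t • v) (fun _ => v) := by
  have hcomp : (fun s : ℝ => W (a + s • v)) =
      (fun y => W (a + y)) ∘ ContinuousLinearMap.smulRight (1 : ℝ →L[ℝ] ℝ) v := by
    ext s; simp
  have hW' : ContDiff ℝ n (fun y => W (a + y)) := hW.comp (contDiff_const.add contDiff_id)
  rw [iteratedDeriv_eq_iteratedFDeriv, hcomp,
    ContinuousLinearMap.iteratedFDeriv_comp_right _ hW' _ le_rfl]
  simp [iteratedFDeriv_comp_add_left]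

theorem IsLocalMax.deriv_deriv_nonpos {f : ℝ → ℝ} {x₀ : ℝ} (h : IsLocalMax f x₀)
    (hc : ContinuousAt f x₀) : deriv (deriv f) x₀ ≤ 0 := by
  -- The second-derivative test yields a local minimum, so `f` is locally constant.
  by_contra! hpos
  have hmin : IsLocalMin f x₀ := isLocalMin_of_deriv_deriv_pos hpos h.deriv_eq_zero hc
  have hconst : f =ᶠ[𝓝 x₀] fun _ => f x₀ :=
    (h.and hmin).mono fun x hx => le_antisymm hx.1 hx.2
  have hderiv : deriv f =ᶠ[𝓝 x₀] fun _ => 0 := by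
    simpa using hconst.deriv
  simp [hderiv.deriv_eq] at hpos

theorem deriv_deriv_nonpos_of_eventually_le_tangent {f : ℝ → ℝ} {x₀ : ℝ}
    (hf : Differentiable ℝ f)
    (h : ∀ᶠ x in 𝓝 x₀, f x ≤ f x₀ + deriv f x₀ * (x - x₀)) :
    deriv (deriv f) x₀ ≤ 0 := by
  set g : ℝ → ℝ := fun x => f x - (f x₀ + deriv f x₀ * (x - x₀))
  have hg : IsLocalMax g x₀ := h.mono fun x hx => by simp only [g]; linarith
  have hderiv : deriv g = fun x => deriv f x - deriv f x₀ := by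
    ext x
    have : HasDerivAt g (deriv f x - deriv f x₀ * 1) x := (hf x).hasDerivAt.sub
      ((((hasDerivAt_id x).sub_const x₀).const_mul (deriv f x₀)).const_add (f x₀))
    simpa using this.deriv
  simpa [hderiv] using hg.deriv_deriv_nonpos ((hf x₀).continuousAt.sub (by fun_prop))

theorem iteratedFDeriv_two_apply_nonpos_of_eventually_le_tangent {E : Type*}
    [NormedAddCommGroup E] [NormedSpace ℝ E] {W : E → ℝ} (hW : ContDiff ℝ 2 W) {a v : E}
    (h : ∀ᶠ t in 𝓝 (0 : ℝ), W (a + t • v) ≤ W a + t * fderiv ℝ W a v) :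
    iteratedFDeriv ℝ 2 W a ![v, v] ≤ 0 := by
  set f : ℝ → ℝ := fun t => W (a + t • v)
  have hf : Differentiable ℝ f :=
    (hW.differentiable two_ne_zero).comp
      ((differentiable_const a).add (differentiable_id.smul_const v))
  have hderiv : deriv f 0 = fderiv ℝ W a v := by
    simpa using iteratedDeriv_comp_add_smul (hW.of_le one_le_two) a v 0
  have hderiv2 : deriv (deriv f) 0 = iteratedFDeriv ℝ 2 W a ![v, v] := by
    rw [show deriv (deriv f) = iteratedDeriv 2 f by rw [iteratedDeriv_eq_iterate]; rfl,
      iteratedDeriv_comp_add_smul hW, zero_smul, add_zero]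
    congr 1
    ext i
    fin_cases i <;> rfl
  rw [← hderiv2]
  refine deriv_deriv_nonpos_of_eventually_le_tangent hf ?_
  simpa [f, hderiv, mul_comm] using h

theorem eventually_add_smul_mem_of_mem_intrinsicInterior {E : Type*} [NormedAddCommGroup E]
    [NormedSpace ℝ E] {K : Set E} {a v : E} (ha : a ∈ intrinsicInterior ℝ K)
    (hv : v ∈ vectorSpan ℝ K) : ∀ᶠ t in 𝓝 (0 : ℝ), a + t • v ∈ K := by
  obtain ⟨b, hb, rfl⟩ := mem_intrinsicInterior.mp ha
  have hline : ∀ t : ℝ, (b : E) + t • v ∈ affineSpan ℝ K := fun t => by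
    simpa [add_comm] using AffineSubspace.vadd_mem_of_mem_direction
      (Submodule.smul_mem _ t (direction_affineSpan ℝ K ▸ hv)) b.2
  set γ : ℝ → affineSpan ℝ K := fun t => ⟨b + t • v, hline t⟩
  have hγ : Continuous γ := by fun_prop
  have hγ0 : γ 0 = b := by ext; simp [γ]
  have := hγ.continuousAt.eventually_mem (hγ0 ▸ isOpen_interior.mem_nhds hb)
  exact this.mono fun t ht => (interior_subset ht : γ t ∈ _)

theorem Submodule.disjoint_of_nonpos_of_pos {R V : Type*} [Ring R] [PartialOrder R]
    [AddCommGroup V] [Module R V] {q : V → R} {S U : Submodule R V}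
    (hS : ∀ v ∈ S, q v ≤ 0) (hU : ∀ v ∈ U, v ≠ 0 → 0 < q v) : Disjoint S U := by
  rw [Submodule.disjoint_def]
  intro v hvS hvU
  by_contra hv
  exact (hU v hvU hv).not_ge (hS v hvS)

theorem stmt8_general
    {E : Type*} [NormedAddCommGroup E] [InnerProductSpace ℝ E] [FiniteDimensional ℝ E]
    (W : E → ℝ) (hW : ContDiff ℝ 2 W)
    (K : Set E)
    (a : E) (ha : a ∈ intrinsicInterior ℝ K)
    (htangent : ∀ x ∈ K, W x ≤ W a + ⟪gradient W a, x - a⟫) :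
    (∀ v ∈ Submodule.span ℝ ((fun x => x - a) '' K),
        iteratedFDeriv ℝ 2 W a ![v, v] ≤ 0) ∧
    (∀ U : Submodule ℝ E,
        (∀ v ∈ U, v ≠ 0 → 0 < iteratedFDeriv ℝ 2 W a ![v, v]) →
        Module.finrank ℝ (Submodule.span ℝ ((fun x => x - a) '' K))
          ≤ Module.finrank ℝ E - Module.finrank ℝ U) := by
  have hspan : Submodule.span ℝ ((fun x => x - a) '' K) = vectorSpan ℝ K :=
    (vectorSpan_eq_span_vsub_set_right ℝ (intrinsicInterior_subset ha)).symm
  have hnonpos : ∀ v ∈ Submodule.span ℝ ((fun x => x - a) '' K),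
      iteratedFDeriv ℝ 2 W a ![v, v] ≤ 0 := by
    intro v hv
    refine iteratedFDeriv_two_apply_nonpos_of_eventually_le_tangent hW ?_
    filter_upwards [eventually_add_smul_mem_of_mem_intrinsicInterior ha (hspan ▸ hv)] with t ht
    simpa [gradient, InnerProductSpace.toDual_symm_apply] using htangent _ ht
  refine ⟨hnonpos, fun U hU => Nat.le_sub_of_add_le ?_⟩
  exact Submodule.finrank_add_finrank_le_of_disjoint
    (Submodule.disjoint_of_nonpos_of_pos hnonpos hU)

/-- **Pools are low-dimensional.**
Let `W : E → ℝ` be `C²` on the finite-dimensional real inner product space `E`, `K` a convex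
set, and `a` a point of the intrinsic (relative) interior of `K` at which `W` lies below its
tangent hyperplane on all of `K`. Then the Hessian quadratic form of `W` at `a` is nonpositive
on the span `S` of `{x − a : x ∈ K}`; consequently, for every subspace `U` on which this
quadratic form is positive definite (so in particular for one of the maximal dimension `ν`),
`dim S ≤ dim E − dim U`. -/
theorem stmt8
    {E : Type*} [NormedAddCommGroup E] [InnerProductSpace ℝ E] [FiniteDimensional ℝ E]
    (W : E → ℝ) (hW : ContDiff ℝ 2 W)
    (K : Set E) (hK : Convex ℝ K)
    (a : E) (ha : a ∈ intrinsicInterior ℝ K)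
    (htangent : ∀ x ∈ K, W x ≤ W a + ⟪gradient W a, x - a⟫) :
    (∀ v ∈ Submodule.span ℝ ((fun x => x - a) '' K),
        iteratedFDeriv ℝ 2 W a ![v, v] ≤ 0) ∧
    (∀ U : Submodule ℝ E,
        (∀ v ∈ U, v ≠ 0 → 0 < iteratedFDeriv ℝ 2 W a ![v, v]) →
        Module.finrank ℝ (Submodule.span ℝ ((fun x => x - a) '' K))
          ≤ Module.finrank ℝ E - Module.finrank ℝ U) :=
  stmt8_general W hW K a ha htangent
end

section
/- Let Ω ⊆ ℝ^L be an open connected set and let f : ℝ^L → ℝ be real analytic on Ω (analytic in a neighborhood of each point of Ω). If the zero set {ω ∈ Ω : f(ω) = 0} has positive Lebesgue measure, then f vanishes identically on Ω. -/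
open MeasureTheory Measure Set Metric Filter Topology

/-!
Near a point `y` where `f y ≠ 0`, restrict `f` to the rays issuing from `y`: on each ray it is a
real analytic function of one variable that does not vanish at the origin, so its zeros are
isolated, hence countable and null. Polar coordinates around `y` then show that the zero set is
null near `y`. So if `f` vanishes identically near no point of `Ω`, its zero set is locally null,
hence null; otherwise the identity theorem makes `f` vanish on the connected set `Ω`.
-/

theorem AnalyticOnNhd.measure_inter_preimage_zero_eq_zero {𝕜 F : Type*}
    [NontriviallyNormedField 𝕜] [SecondCountableTopology 𝕜] [MeasurableSpace 𝕜]
    [NormedAddCommGroup F] [NormedSpace 𝕜 F] {μ : Measure 𝕜} [NullSingletonClass μ]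
    {g : 𝕜 → F} {U : Set 𝕜} {x : 𝕜} (hg : AnalyticOnNhd 𝕜 g U) (hU : IsConnected U)
    (hUm : MeasurableSet U) (hx : x ∈ U) (hgx : g x ≠ 0) :
    μ (U ∩ g ⁻¹' {0}) = 0 := by
  have := ae_restrict_le_codiscreteWithin (μ := μ) hUm
    (hg.preimage_zero_mem_codiscreteWithin hgx hx hU)
  rwa [mem_ae_iff, restrict_apply' hUm, preimage_compl, compl_compl, inter_comm] at this

theorem StarConvex.setOf_add_smul_mem {E : Type*} [AddCommGroup E] [Module ℝ E] {y : E}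
    {U : Set E} (hU : StarConvex ℝ y U) (u : E) : StarConvex ℝ 0 {r : ℝ | y + r • u ∈ U} := by
  intro r hr a b ha hb hab
  have key : y + (a • (0 : ℝ) + b • r) • u = a • y + b • (y + r • u) := by
    linear_combination (norm := module) -(hab • y)
  show y + _ ∈ U
  rw [key]
  exact hU hr ha hb hab

section AddHaar

variable {E F : Type*} [NormedAddCommGroup E] [NormedSpace ℝ E] [FiniteDimensional ℝ E]
  [MeasurableSpace E] [BorelSpace E] (μ : Measure E) [μ.IsAddHaarMeasure]
  [NormedAddCommGroup F] [NormedSpace ℝ F]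

theorem MeasureTheory.Measure.addHaar_eq_zero_of_forall_ray_null [Nontrivial E] {A : Set E}
    (hA : MeasurableSet A) (y : E)
    (h : ∀ u ∈ sphere (0 : E) 1, volume {r : ℝ | 0 < r ∧ y + r • u ∈ A} = 0) : μ A = 0 := by
  -- move `y` to the origin and discard the null point `0`, so that polar coordinates apply
  rw [← measure_preimage_add μ y A, ← measure_sdiff_null (measure_singleton (0 : E)), sdiff_eq,
    inter_comm, ← Subtype.image_preimage_coe,
    ← comap_subtype_coe_apply (measurableSet_singleton 0).compl]
  set e := homeomorphUnitSphereProd E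
  set s := e.symm ⁻¹' (Subtype.val ⁻¹' ((y + ·) ⁻¹' A))
  have hs : MeasurableSet s :=
    e.symm.continuous.measurable (measurable_subtype_coe (hA.preimage (measurable_const_add y)))
  have hslice (u : sphere (0 : E) 1) :
      volumeIoiPow (Module.finrank ℝ E - 1) (Prod.mk u ⁻¹' s) = 0 := by
    refine withDensity_absolutelyContinuous _ _ ?_
    rw [comap_subtype_coe_apply measurableSet_Ioi]
    refine measure_mono_null ?_ (h u u.2)
    rintro _ ⟨r, hr, rfl⟩
    exact ⟨r.2, by simpa [s, e] using hr⟩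
  have hpre : e ⁻¹' s = Subtype.val ⁻¹' ((y + ·) ⁻¹' A) := e.preimage_symm_preimage _
  rw [← hpre, (measurePreserving_homeomorphUnitSphereProd μ).measure_preimage hs.nullMeasurableSet,
    Measure.prod_apply hs]
  simp [hslice]

theorem AnalyticOnNhd.addHaar_zero_set_eq_zero_of_starConvex {f : E → F} {U : Set E} {y : E}
    (hf : AnalyticOnNhd ℝ f U) (hU : IsOpen U) (hUs : StarConvex ℝ y U) (hy : y ∈ U)
    (hfy : f y ≠ 0) : μ {z ∈ U | f z = 0} = 0 := by
  rcases subsingleton_or_nontrivial E with _ | _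
  · convert measure_empty (μ := μ)
    exact eq_empty_of_forall_notMem fun z hz => hfy (Subsingleton.elim z y ▸ hz.2)
  have hZ : MeasurableSet {z ∈ U | f z = 0} := by
    have hZ_eq : {z ∈ U | f z = 0} = U \ (U ∩ f ⁻¹' {0}ᶜ) := by
      ext z
      by_cases hz : f z = 0 <;> simp [hz]
    rw [hZ_eq]
    exact hU.measurableSet.diff
      (hf.continuousOn.isOpen_inter_preimage hU isOpen_compl_singleton).measurableSet
  refine μ.addHaar_eq_zero_of_forall_ray_null hZ y fun u _ => ?_
  have hline : Continuous fun r : ℝ => y + r • u := by fun_prop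
  have hJ : IsConnected {r : ℝ | y + r • u ∈ U} :=
    ((hUs.setOf_add_smul_mem u).isPathConnected (by simpa using hy)).isConnected
  have hg : AnalyticOnNhd ℝ (fun r : ℝ => f (y + r • u)) {r : ℝ | y + r • u ∈ U} :=
    fun r hr => AnalyticAt.comp (f := fun r : ℝ => y + r • u) (hf _ hr) (by fun_prop)
  refine measure_mono_null ?_ (hg.measure_inter_preimage_zero_eq_zero hJ
    (hU.preimage hline).measurableSet (x := 0) (by simpa using hy) (by simpa using hfy))
  rintro r ⟨-, hrU, hr0⟩
  exact ⟨hrU, hr0⟩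

theorem AnalyticOnNhd.eqOn_zero_of_preconnected_of_addHaar_zero_set_ne_zero {f : E → F}
    {U : Set E} (hf : AnalyticOnNhd ℝ f U) (hU : IsOpen U) (hUc : IsPreconnected U)
    (hμ : μ {z ∈ U | f z = 0} ≠ 0) : EqOn f 0 U := by
  by_cases h : ∃ x ∈ U, f =ᶠ[𝓝 x] 0
  · obtain ⟨x, hx, hfx⟩ := h
    exact hf.eqOn_zero_of_preconnected_of_eventuallyEq_zero hUc hx hfx
  push Not at h
  refine absurd (measure_null_of_locally_null _ fun x hx => ?_) hμ
  obtain ⟨ε, hε, hball⟩ := Metric.isOpen_iff.mp hU x hx.1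
  obtain ⟨y, hy, hfy⟩ : ∃ y ∈ ball x ε, f y ≠ 0 := by
    by_contra! H
    exact h x hx.1 (eventually_of_mem (ball_mem_nhds x hε) H)
  refine ⟨_, inter_mem_nhdsWithin _ (ball_mem_nhds x hε), measure_mono_null ?_
    ((hf.mono hball).addHaar_zero_set_eq_zero_of_starConvex μ isOpen_ball
      ((convex_ball x ε).starConvex hy) hy hfy)⟩
  rintro z ⟨⟨-, hz⟩, hzx⟩
  exact ⟨hzx, hz⟩

end AddHaar

/-- If `f` is real analytic on an open connected set `Ω ⊆ ℝ^L` (analytic at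
each point of `Ω`) and its zero set inside `Ω` has positive Lebesgue measure, then `f` vanishes
identically on `Ω`. -/
theorem stmt10
    (L : ℕ) (Ω : Set (EuclideanSpace ℝ (Fin L)))
    (hopen : IsOpen Ω) (hconn : IsConnected Ω)
    (f : EuclideanSpace ℝ (Fin L) → ℝ)
    (hf : ∀ ω ∈ Ω, AnalyticAt ℝ f ω)
    (hpos : 0 < volume {ω ∈ Ω | f ω = 0}) :
    ∀ ω ∈ Ω, f ω = 0 :=
  AnalyticOnNhd.eqOn_zero_of_preconnected_of_addHaar_zero_set_ne_zero volume hf hopen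
    hconn.isPreconnected hpos.ne'
end

section
/- Let E be a finite-dimensional real inner product space and W : E → ℝ twice continuously differentiable. Suppose W is concave along rays for large arguments: there exist ε ∈ (0,1) and K > 0 such that for every a ∈ E with ‖a‖ > K and every nonzero b ∈ E with ⟪a, b⟫ > (1 − ε)‖a‖·‖b‖, one has D²W(a)(b, b) < 0. Then every set Ξ ⊆ E satisfying c(a,b) ≥ 0 for all a, b ∈ Ξ is bounded, where c(a,b) = W(b) − W(a) + ⟪∇W(a), a − b⟫. -/
/-! If `Ξ` were unbounded, compactness of the unit ball of directions gives `u, v ∈ Ξ` with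
`‖u‖` large, `‖v‖ ≫ ‖u‖` and nearly equal directions. Every point `x` of the segment `[u, v]` is
then large and nearly parallel to the chord `v - u`, so `s ↦ DW(u + s (v - u)) (v - u)` is strictly
decreasing on `[0, 1]`: `⟪∇W v - ∇W u, v - u⟫ < 0`. But that inner product equals
`c(u, v) + c(v, u) ≥ 0`. -/

open scoped RealInnerProductSpace
open Bornology Filter Set Topology

section NormedSpace

variable {E : Type*} [NormedAddCommGroup E] [NormedSpace ℝ E]

lemma norm_inv_norm_smul_sub_le {x w : E} (hw : ‖w‖ = 1) {s : ℝ} (hs : 0 < s) :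
    ‖‖x‖⁻¹ • x - w‖ ≤ 2 * ‖x - s • w‖ / s := by
  have hsw : ‖s • w‖ = s := by rw [norm_smul, hw, Real.norm_of_nonneg hs.le, mul_one]
  have hrescale : ‖‖x‖⁻¹ • x - s⁻¹ • x‖ ≤ ‖x - s • w‖ / s := by
    rcases eq_or_ne x 0 with rfl | hx
    · simp only [smul_zero, sub_zero, norm_zero, zero_sub, norm_neg]
      positivity
    · have hx' : 0 < ‖x‖ := norm_pos_iff.2 hx
      have : ‖‖x‖⁻¹ • x - s⁻¹ • x‖ = |s - ‖x‖| / s := by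
        rw [← sub_smul, norm_smul, Real.norm_eq_abs, inv_sub_inv hx'.ne' hs.ne', abs_div,
          abs_mul, abs_of_pos hx', abs_of_pos hs]
        field_simp
      rw [this]
      gcongr
      calc |s - ‖x‖| = |‖s • w‖ - ‖x‖| := by rw [hsw]
        _ ≤ ‖x - s • w‖ := (abs_norm_sub_norm_le _ _).trans_eq (norm_sub_rev _ _)
  have hshift : ‖s⁻¹ • x - w‖ = ‖x - s • w‖ / s := by
    rw [show s⁻¹ • x - w = s⁻¹ • (x - s • w) by
      rw [smul_sub, smul_smul, inv_mul_cancel₀ hs.ne', one_smul], norm_smul,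
      Real.norm_of_nonneg (inv_nonneg.2 hs.le), inv_mul_eq_div]
  calc ‖‖x‖⁻¹ • x - w‖ ≤ ‖‖x‖⁻¹ • x - s⁻¹ • x‖ + ‖s⁻¹ • x - w‖ :=
        norm_sub_le_norm_sub_add_norm_sub _ _ _
    _ ≤ 2 * ‖x - s • w‖ / s := by rw [hshift, two_mul, add_div]; linarith

lemma norm_segment_ge_and_direction_close {u v : E} {δ : ℝ} (hu : u ≠ 0) (hδ : δ ≤ 1)
    (huv : ‖u‖ ≤ δ * ‖v‖) (hdir : ‖‖u‖⁻¹ • u - ‖v‖⁻¹ • v‖ ≤ δ) {t : ℝ} (ht : t ∈ Icc (0 : ℝ) 1) :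
    (1 - δ) * ‖u‖ ≤ ‖u + t • (v - u)‖ ∧
      ‖‖u + t • (v - u)‖⁻¹ • (u + t • (v - u)) - ‖v - u‖⁻¹ • (v - u)‖ ≤ 4 * δ := by
  obtain ⟨ht0, ht1⟩ := ht
  have hu' : 0 < ‖u‖ := norm_pos_iff.2 hu
  have hδv : 0 < δ * ‖v‖ := hu'.trans_le huv
  have hδ0 : 0 < δ := pos_of_mul_pos_left hδv (norm_nonneg v)
  have hv : 0 < ‖v‖ := pos_of_mul_pos_right hδv hδ0.le
  have huv' : ‖u‖ ≤ ‖v‖ := huv.trans (mul_le_of_le_one_left (norm_nonneg _) hδ)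
  set e := ‖v‖⁻¹ • v with he_def
  have he : ‖e‖ = 1 := by rw [norm_smul, norm_inv, norm_norm, inv_mul_cancel₀ hv.ne']
  set x := u + t • (v - u)
  set s := (1 - t) * ‖u‖ + t * ‖v‖
  have hs : ‖u‖ ≤ s := by nlinarith
  -- only the `u`-part of `x = (1 - t) • u + t • v` leaves the ray through `e`
  have hdev : ‖x - s • e‖ ≤ δ * s := by
    set eu := ‖u‖⁻¹ • u
    have hu_eq : u = ‖u‖ • eu := by rw [smul_smul, mul_inv_cancel₀ hu'.ne', one_smul]
    have hv_eq : v = ‖v‖ • e := by rw [he_def, smul_smul, mul_inv_cancel₀ hv.ne', one_smul]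
    have : x - s • e = ((1 - t) * ‖u‖) • (eu - e) := by
      linear_combination (norm := module) (1 - t) • hu_eq + t • hv_eq
    rw [this, norm_smul, Real.norm_of_nonneg (by nlinarith), mul_comm δ]
    gcongr
    nlinarith
  have hx_dir : ‖‖x‖⁻¹ • x - e‖ ≤ 2 * δ := by
    refine (norm_inv_norm_smul_sub_le he (hu'.trans_le hs)).trans ?_
    rw [div_le_iff₀ (hu'.trans_le hs)]
    nlinarith
  have hd_dir : ‖‖v - u‖⁻¹ • (v - u) - e‖ ≤ 2 * δ := by
    refine (norm_inv_norm_smul_sub_le he hv).trans ?_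
    rw [he_def, smul_smul, mul_inv_cancel₀ hv.ne', one_smul, sub_sub_cancel_left, norm_neg,
      div_le_iff₀ hv]
    linarith
  constructor
  · have : ‖s • e‖ - ‖x‖ ≤ ‖x - s • e‖ := (norm_sub_norm_le _ _).trans_eq (norm_sub_rev _ _)
    rw [norm_smul, he, Real.norm_of_nonneg (hu'.le.trans hs)] at this
    nlinarith
  · calc _ ≤ ‖‖x‖⁻¹ • x - e‖ + ‖e - ‖v - u‖⁻¹ • (v - u)‖ :=
          norm_sub_le_norm_sub_add_norm_sub _ _ _
      _ ≤ 4 * δ := by rw [norm_sub_rev e]; linarith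

lemma exists_pair_mem_direction_close_of_not_isBounded [FiniteDimensional ℝ E] {Ξ : Set E}
    (hΞ : ¬ IsBounded Ξ) {δ : ℝ} (hδ : 0 < δ) (R : ℝ) :
    ∃ u ∈ Ξ, ∃ v ∈ Ξ, R < ‖u‖ ∧ ‖u‖ ≤ δ * ‖v‖ ∧ ‖‖u‖⁻¹ • u - ‖v‖⁻¹ • v‖ < δ := by
  have hfreq : ∃ᶠ x in cobounded E, x ∈ Ξ := fun h ↦ hΞ (isBounded_def.2 h)
  have : (cobounded E ⊓ 𝓟 Ξ).NeBot := frequently_iff_neBot.1 hfreq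
  obtain ⟨w, -, hw⟩ := (isCompact_closedBall (0 : E) 1).exists_clusterPt
    (f := map (fun x ↦ ‖x‖⁻¹ • x) (cobounded E ⊓ 𝓟 Ξ)) <| by
      refine le_principal_iff.2 <| eventually_map.2 <| Eventually.of_forall fun x ↦ ?_
      rw [dist_zero_right, norm_smul, norm_inv, norm_norm]
      exact inv_mul_le_one_of_le₀ le_rfl (norm_nonneg x)
  have hnear : ∀ r : ℝ, ∃ u ∈ Ξ, r < ‖u‖ ∧ dist (‖u‖⁻¹ • u) w < δ / 2 := fun r ↦
    ((mapClusterPt_iff_frequently.1 hw _ (Metric.ball_mem_nhds w (half_pos hδ))).and_eventually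
      ((inf_le_left : cobounded E ⊓ 𝓟 Ξ ≤ _) (tendsto_norm_cobounded_atTop.eventually_gt_atTop r))
      |>.and_eventually (mem_inf_of_right (mem_principal_self Ξ))).exists.imp
      fun u ⟨⟨hw, hr⟩, hu⟩ ↦ ⟨hu, hr, hw⟩
  obtain ⟨u, hu, hRu, hu_dir⟩ := hnear R
  obtain ⟨v, hv, huv, hv_dir⟩ := hnear (‖u‖ / δ)
  refine ⟨u, hu, v, hv, hRu, ?_, ?_⟩
  · rw [div_lt_iff₀ hδ] at huv
    linarith
  · rw [← dist_eq_norm]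
    linarith [dist_triangle_right (‖u‖⁻¹ • u) (‖v‖⁻¹ • v) w]

lemma hasDerivAt_fderiv_add_smul_apply {W : E → ℝ} (hW : ContDiff ℝ 2 W) (u d : E) (t : ℝ) :
    HasDerivAt (fun s : ℝ ↦ fderiv ℝ W (u + s • d) d)
      (iteratedFDeriv ℝ 2 W (u + t • d) ![d, d]) t := by
  have hline : HasDerivAt (fun s : ℝ ↦ u + s • d) d t := by
    simpa using ((hasDerivAt_id t).smul_const d).const_add u
  have hD : HasFDerivAt (fderiv ℝ W) (fderiv ℝ (fderiv ℝ W) (u + t • d)) (u + t • d) :=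
    ((hW.fderiv_right (by norm_num)).differentiable one_ne_zero).differentiableAt.hasFDerivAt
  have hcomp : HasDerivAt (fun s : ℝ ↦ fderiv ℝ W (u + s • d))
      (fderiv ℝ (fderiv ℝ W) (u + t • d) d) t :=
    hD.comp_hasDerivAt t hline
  rw [iteratedFDeriv_two_apply]
  simpa using hcomp.clm_apply (hasDerivAt_const t d)

lemma fderiv_add_apply_lt_of_iteratedFDeriv_neg {W : E → ℝ} (hW : ContDiff ℝ 2 W) {u d : E}
    (hneg : ∀ t ∈ Icc (0 : ℝ) 1, iteratedFDeriv ℝ 2 W (u + t • d) ![d, d] < 0) :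
    fderiv ℝ W (u + d) d < fderiv ℝ W u d := by
  have hder := hasDerivAt_fderiv_add_smul_apply hW u d
  have hanti : StrictAntiOn (fun s : ℝ ↦ fderiv ℝ W (u + s • d) d) (Icc 0 1) := by
    refine strictAntiOn_of_deriv_neg (convex_Icc 0 1)
      (fun t _ ↦ (hder t).continuousAt.continuousWithinAt) fun t ht ↦ ?_
    rw [(hder t).deriv]
    exact hneg t (Ioo_subset_Icc_self (by rwa [interior_Icc] at ht))
  simpa using hanti (left_mem_Icc.2 zero_le_one) (right_mem_Icc.2 zero_le_one) zero_lt_one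

end NormedSpace

section InnerProductSpace

variable {E : Type*} [NormedAddCommGroup E] [InnerProductSpace ℝ E]

lemma mul_norm_mul_lt_inner_of_direction_close {x y : E} (hx : x ≠ 0) (hy : y ≠ 0) {ε : ℝ}
    (h : ‖‖x‖⁻¹ • x - ‖y‖⁻¹ • y‖ ^ 2 < 2 * ε) : (1 - ε) * (‖x‖ * ‖y‖) < ⟪x, y⟫ := by
  have hxy : 0 < ‖x‖ * ‖y‖ := mul_pos (norm_pos_iff.2 hx) (norm_pos_iff.2 hy)
  have hsq : ‖‖x‖⁻¹ • x - ‖y‖⁻¹ • y‖ ^ 2 = 2 - 2 * (⟪x, y⟫ / (‖x‖ * ‖y‖)) := by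
    rw [norm_sub_sq_real, norm_smul, norm_smul, real_inner_smul_left, real_inner_smul_right,
      norm_inv, norm_norm, norm_inv, norm_norm, inv_mul_cancel₀ (norm_pos_iff.2 hx).ne',
      inv_mul_cancel₀ (norm_pos_iff.2 hy).ne', div_eq_mul_inv, mul_inv]
    ring
  rw [← lt_div_iff₀ hxy]
  linarith

end InnerProductSpace

/-- **Concealing the tails: concavity along rays bounds W-monotone sets.**
Let `W : E → ℝ` be `C²` on a finite-dimensional real inner product space and suppose `W` is
concave along rays for large arguments: there are `ε ∈ (0,1)` and `K > 0` such that for every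
`a` with `‖a‖ > K` and every nonzero `b` in the `ε`-cone around `a`
(`⟪a, b⟫ > (1 − ε)‖a‖‖b‖`), the Hessian form `D²W(a)(b,b)` is negative. Then every
`W`-monotone set `Ξ` — one with Bregman cost `c(a,b) = W b − W a + ⟪∇W a, a − b⟫ ≥ 0`
for all `a, b ∈ Ξ` — is bounded. -/
theorem stmt11
    {E : Type*} [NormedAddCommGroup E] [InnerProductSpace ℝ E] [FiniteDimensional ℝ E]
    (W : E → ℝ) (hW : ContDiff ℝ 2 W)
    (hconc : ∃ ε : ℝ, ε ∈ Set.Ioo (0 : ℝ) 1 ∧ ∃ K : ℝ, 0 < K ∧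
      ∀ a : E, K < ‖a‖ → ∀ b : E, b ≠ 0 →
        (1 - ε) * (‖a‖ * ‖b‖) < ⟪a, b⟫ →
        iteratedFDeriv ℝ 2 W a ![b, b] < 0) :
    ∀ Ξ : Set E,
      (∀ a ∈ Ξ, ∀ b ∈ Ξ, 0 ≤ W b - W a + ⟪gradient W a, a - b⟫) →
      Bornology.IsBounded Ξ := by
  obtain ⟨ε, ⟨hε0, hε1⟩, K, hK, hconc⟩ := hconc
  intro Ξ hΞ
  by_contra hunb
  obtain ⟨u, hu, v, hv, hKu, huv, hdir⟩ :=
    exists_pair_mem_direction_close_of_not_isBounded hunb (by positivity : 0 < ε / 4) (2 * K)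
  have hu0 : u ≠ 0 := norm_pos_iff.1 (by linarith)
  have hd0 : v - u ≠ 0 := sub_ne_zero.2 fun hvu ↦ by
    subst hvu
    nlinarith [norm_pos_iff.2 hu0]
  have hneg : ∀ t ∈ Icc (0 : ℝ) 1,
      iteratedFDeriv ℝ 2 W (u + t • (v - u)) ![v - u, v - u] < 0 := by
    intro t ht
    obtain ⟨hnorm, hclose⟩ :=
      norm_segment_ge_and_direction_close hu0 (by linarith) huv hdir.le ht
    have hx : K < ‖u + t • (v - u)‖ := by nlinarith
    refine hconc _ hx _ hd0 (mul_norm_mul_lt_inner_of_direction_close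
      (norm_pos_iff.1 (hK.trans hx)) hd0 ?_)
    nlinarith [norm_nonneg (‖u + t • (v - u)‖⁻¹ • (u + t • (v - u)) - ‖v - u‖⁻¹ • (v - u))]
  have hgrad_decr : fderiv ℝ W v (v - u) < fderiv ℝ W u (v - u) := by
    simpa using fderiv_add_apply_lt_of_iteratedFDeriv_neg hW hneg
  have hgrad_mono : fderiv ℝ W u (v - u) ≤ fderiv ℝ W v (v - u) := by
    have huv_cost := hΞ u hu v hv
    have hvu_cost := hΞ v hv u hu
    rw [inner_gradient_left, map_sub] at huv_cost hvu_cost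
    rw [map_sub, map_sub]
    linarith
  exact hgrad_decr.not_ge hgrad_mono
end

section
/- Let E be a finite-dimensional real inner product space, H : E → E a self-adjoint positive-definite linear operator, and φ : ℝ → ℝ twice continuously differentiable. Suppose there exist ε₀ > 0 and x₀ ∈ ℝ such that for all x ≥ x₀: φ'(x) ≠ 0 and −φ''(x)/|φ'(x)| > ε₀. Define W(a) = φ(⟪a, H a⟫), whose gradient is ∇W(a) = 2φ'(⟪a, Ha⟫)·Ha. Then every set Ξ ⊆ E satisfying W(b) − W(a) + ⟪2φ'(⟪a, Ha⟫)·Ha, a − b⟫ ≥ 0 for all a, b ∈ Ξ is bounded. -/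
/-! Write `q a = ⟪a, H a⟫`. On a pair `(a, b)`, `W`-monotonicity reads
`0 ≤ φ (q b) - φ (q a) + 2 φ'(q a) y` with `y = q a - ⟪H a, b⟫`, and `|⟪H a, b⟫| ≤ q a / 4 + q b`
puts `y` between `q a / 2` and `2 q a` once `q a ≥ 4 q b`. Beyond `x₀` the sign of `φ'` is constant.
If it is negative, `φ'' ≤ -ε |φ'|` drives `φ'` to `-∞` and concavity gives
`φ (s) ≥ φ (x₁) + (s - x₁) φ'(s)`, so the right-hand side tends to `-∞` as `q a → ∞`. If it is
positive, Grönwall gives `φ'(s) = O(e^{-ε s})`, so `s φ'(s) → 0` while `φ (q a) - φ (q b)` stays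
above a positive gap. As `q` is coercive, an unbounded `Ξ` contains points `a` with `q a`
arbitrarily large, and the inequality fails for them. -/

open scoped RealInnerProductSpace

open Filter Set Real Topology Bornology

lemma Filter.Tendsto.exists_mem_ge_of_not_isBounded {α : Type*} [Bornology α] {g : α → ℝ}
    (hg : Tendsto g (cobounded α) atTop) {s : Set α} (hs : ¬Bornology.IsBounded s) (R : ℝ) :
    ∃ x ∈ s, R ≤ g x := by
  have hfreq : ∃ᶠ x in cobounded α, x ∈ s := fun h => hs (isBounded_def.2 h)
  exact (hfreq.and_eventually (hg.eventually_ge_atTop R)).exists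

section QuadraticForm

variable {E : Type*} [NormedAddCommGroup E] [InnerProductSpace ℝ E] (H : E →ₗ[ℝ] E)

lemma LinearMap.exists_pos_mul_norm_sq_le_inner_map_self [FiniteDimensional ℝ E]
    (hpos : ∀ x : E, x ≠ 0 → 0 < ⟪x, H x⟫) : ∃ c > 0, ∀ x, c * ‖x‖ ^ 2 ≤ ⟪x, H x⟫ := by
  rcases subsingleton_or_nontrivial E with hE | hE
  · exact ⟨1, one_pos, fun x => by simp [Subsingleton.elim x 0]⟩
  have hH : Continuous H := H.continuous_of_finiteDimensional
  obtain ⟨u, hu, hmin⟩ := (isCompact_sphere (0 : E) 1).exists_isMinOn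
    (NormedSpace.sphere_nonempty.2 zero_le_one)
    (by fun_prop : Continuous fun x : E => ⟪x, H x⟫).continuousOn
  have hu₀ : u ≠ 0 := ne_zero_of_mem_unit_sphere ⟨u, hu⟩
  refine ⟨⟪u, H u⟫, hpos u hu₀, fun x => ?_⟩
  rcases eq_or_ne x 0 with rfl | hx
  · simp
  have hx' : 0 < ‖x‖ := norm_pos_iff.2 hx
  have hscale : ⟪x, H x⟫ = ‖x‖ ^ 2 * ⟪‖x‖⁻¹ • x, H (‖x‖⁻¹ • x)⟫ := by
    rw [map_smul, real_inner_smul_left, real_inner_smul_right]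
    field_simp
  rw [hscale, mul_comm]
  gcongr
  exact hmin (by simp [norm_smul, hx'.ne'])

lemma LinearMap.tendsto_inner_map_self_cobounded [FiniteDimensional ℝ E]
    (hpos : ∀ x : E, x ≠ 0 → 0 < ⟪x, H x⟫) :
    Tendsto (fun x => ⟪x, H x⟫) (cobounded E) atTop := by
  obtain ⟨c, hc, hle⟩ := H.exists_pos_mul_norm_sq_le_inner_map_self hpos
  exact tendsto_atTop_mono hle
    (((tendsto_pow_atTop two_ne_zero).comp tendsto_norm_cobounded_atTop).const_mul_atTop hc)

lemma LinearMap.IsSymmetric.abs_inner_le {H : E →ₗ[ℝ] E} (hsym : H.IsSymmetric)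
    (hnonneg : ∀ x, 0 ≤ ⟪x, H x⟫) (a b : E) : |⟪H a, b⟫| ≤ ⟪a, H a⟫ / 4 + ⟪b, H b⟫ := by
  have hexpand : ∀ c : ℝ,
      ⟪a + c • b, H (a + c • b)⟫ = ⟪a, H a⟫ + 2 * c * ⟪H a, b⟫ + c ^ 2 * ⟪b, H b⟫ := by
    intro c
    simp only [map_add, map_smul, inner_add_left, inner_add_right, real_inner_smul_left,
      real_inner_smul_right, ← hsym a b, real_inner_comm (H a) b]
    ring
  have h₁ := hexpand 2 ▸ hnonneg (a + (2 : ℝ) • b)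
  have h₂ := hexpand (-2) ▸ hnonneg (a + (-2 : ℝ) • b)
  rw [abs_le]
  constructor <;> linarith

end QuadraticForm

section RealFunctions

variable {f : ℝ → ℝ} {x₁ : ℝ}

lemma tendsto_atBot_of_deriv_le_neg {c : ℝ} (hc : 0 < c) (hf : Differentiable ℝ f)
    (hderiv : ∀ x ≥ x₁, deriv f x ≤ -c) : Tendsto f atTop atBot := by
  have hlin : ∀ s ≥ x₁, f s ≤ f x₁ + -c * (s - x₁) := fun s hs => by
    have := (convex_Ici x₁).image_sub_le_mul_sub_of_deriv_le hf.continuous.continuousOn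
      hf.differentiableOn (fun x hx => hderiv x (interior_subset hx))
      x₁ self_mem_Ici s hs hs
    linarith
  refine tendsto_atBot_mono' atTop (eventually_atTop.2 ⟨x₁, hlin⟩) ?_
  exact tendsto_atBot_add_const_left _ _
    ((tendsto_id.atTop_add tendsto_const_nhds).const_mul_atTop_of_neg (neg_neg_of_pos hc))

lemma tendsto_mul_nhds_zero_of_deriv_le_neg_mul {ε : ℝ} (hε : 0 < ε) (hf : Differentiable ℝ f)
    (hpos : ∀ x ≥ x₁, 0 < f x) (hderiv : ∀ x ≥ x₁, deriv f x ≤ -ε * f x) :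
    Tendsto (fun s => s * f s) atTop (𝓝 0) := by
  have hgronwall : ∀ s ≥ x₁, f s ≤ f x₁ * exp (ε * x₁) * exp (-ε * s) := fun s hs => by
    have := le_gronwallBound_of_liminf_deriv_right_le hf.continuous.continuousOn
      (fun x _ r hr => (hf x).hasDerivAt.hasDerivWithinAt.liminf_right_slope_le hr) le_rfl
      (K := -ε) (ε := 0) (fun x hx => by simpa using hderiv x hx.1) s ⟨hs, le_rfl⟩
    rw [gronwallBound_ε0] at this
    rw [mul_assoc, ← exp_add]
    convert this using 3
    ring
  have hbound := (tendsto_rpow_mul_exp_neg_mul_atTop_nhds_zero 1 ε hε).const_mul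
    (f x₁ * exp (ε * x₁))
  simp only [rpow_one, mul_zero] at hbound
  refine tendsto_of_tendsto_of_tendsto_of_le_of_le' tendsto_const_nhds hbound ?_ ?_
  · filter_upwards [eventually_ge_atTop x₁, eventually_ge_atTop 0] with s hs hs₀
    exact mul_nonneg hs₀ (hpos s hs).le
  · filter_upwards [eventually_ge_atTop x₁, eventually_ge_atTop 0] with s hs hs₀
    calc s * f s ≤ s * (f x₁ * exp (ε * x₁) * exp (-ε * s)) := by gcongr; exact hgronwall s hs
      _ = _ := by ring

lemma ConcaveOn.add_mul_deriv_le (hf : ConcaveOn ℝ (Ici x₁) f) (hd : Differentiable ℝ f)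
    {s : ℝ} (hs : x₁ ≤ s) : f x₁ + (s - x₁) * deriv f s ≤ f s := by
  rcases hs.eq_or_lt with rfl | hs
  · simp
  have := hf.deriv_le_slope self_mem_Ici hs.le hs (hd s)
  rw [slope_def_field, le_div_iff₀ (sub_pos.2 hs)] at this
  linarith

lemma ConcaveOn.eventually_sub_add_two_mul_deriv_mul_neg (hf : ConcaveOn ℝ (Ici x₁) f)
    (hx₁ : 0 < x₁) (hd : Differentiable ℝ f) (hbot : Tendsto (deriv f) atTop atBot) (p : ℝ) :
    ∀ᶠ s in atTop, ∀ y ∈ Icc (s / 2) (2 * s), f p - f s + 2 * deriv f s * y < 0 := by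
  filter_upwards [eventually_ge_atTop x₁, hbot.eventually_lt_atBot 0,
    (hbot.const_mul_atBot hx₁).eventually_lt_atBot (f x₁ - f p)] with s hs hneg hlarge y hy
  have := hf.add_mul_deriv_le hd hs
  nlinarith [hy.1]

lemma StrictMonoOn.eventually_sub_add_two_mul_deriv_mul_neg (hf : StrictMonoOn f (Ici x₁))
    (hpos : ∀ x ≥ x₁, 0 < deriv f x) (hzero : Tendsto (fun s => s * deriv f s) atTop (𝓝 0))
    {p : ℝ} (hp : x₁ ≤ p) :
    ∀ᶠ s in atTop, ∀ y ∈ Icc (s / 2) (2 * s), f p - f s + 2 * deriv f s * y < 0 := by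
  have hgap : 0 < f (p + 1) - f p := sub_pos.2 (hf hp (by simp; linarith) (lt_add_one p))
  filter_upwards [eventually_ge_atTop (p + 1),
    hzero.eventually (gt_mem_nhds (div_pos hgap four_pos))] with s hs hsmall y hy
  have hle : f (p + 1) ≤ f s := hf.monotoneOn (by simp; linarith) (by simp; linarith) hs
  have := hpos s (by linarith)
  nlinarith [hy.2]

theorem exists_forall_ge_eventually_sub_add_two_mul_deriv_mul_neg {ε x₀ : ℝ} (hε : 0 < ε)
    (hd : Differentiable ℝ f) (hd' : Differentiable ℝ (deriv f))
    (hne : ∀ x ≥ x₀, deriv f x ≠ 0) (hconc : ∀ x ≥ x₀, deriv (deriv f) x ≤ -(ε * |deriv f x|)) :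
    ∃ x₁, ∀ p ≥ x₁, ∀ᶠ s in atTop, ∀ y ∈ Icc (s / 2) (2 * s),
      f p - f s + 2 * deriv f s * y < 0 := by
  have hanti : AntitoneOn (deriv f) (Ici x₀) :=
    antitoneOn_of_deriv_nonpos (convex_Ici x₀) hd'.continuous.continuousOn
      hd'.differentiableOn fun x hx => by
        rw [interior_Ici] at hx
        nlinarith [hconc x hx.le, abs_nonneg (deriv f x)]
  by_cases hneg : ∃ t ≥ x₀, deriv f t < 0
  · obtain ⟨t, ht, hft⟩ := hneg
    have hbot : Tendsto (deriv f) atTop atBot := by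
      refine tendsto_atBot_of_deriv_le_neg (x₁ := t) (c := -(ε * deriv f t)) (by nlinarith) hd'
        fun x hx => ?_
      have hle : deriv f x ≤ deriv f t := hanti ht (ht.trans hx) hx
      have := hconc x (ht.trans hx)
      rw [abs_of_neg (hle.trans_lt hft)] at this
      nlinarith
    have hconcave : ConcaveOn ℝ (Ici (max t 1)) f := by
      refine AntitoneOn.concaveOn_of_deriv (convex_Ici _) hd.continuous.continuousOn
        hd.differentiableOn (hanti.mono ?_)
      exact interior_subset.trans (Ici_subset_Ici.2 (ht.trans (le_max_left _ _)))
    exact ⟨max t 1, fun p _ =>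
      hconcave.eventually_sub_add_two_mul_deriv_mul_neg (by positivity) hd hbot p⟩
  · push Not at hneg
    have hpos : ∀ x ≥ x₀, 0 < deriv f x := fun x hx => (hneg x hx).lt_of_ne' (hne x hx)
    have hmono : StrictMonoOn f (Ici x₀) :=
      strictMonoOn_of_deriv_pos (convex_Ici x₀) hd.continuous.continuousOn fun x hx => by
        rw [interior_Ici] at hx
        exact hpos x hx.le
    have hzero := tendsto_mul_nhds_zero_of_deriv_le_neg_mul hε hd' hpos fun x hx => by
      have := hconc x hx
      rwa [abs_of_pos (hpos x hx), ← neg_mul] at this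
    exact ⟨x₀, fun p hp => hmono.eventually_sub_add_two_mul_deriv_mul_neg hpos hzero hp⟩

end RealFunctions

/-- **Concave marginal utility implies concealing the tails.**
Let `H` be a self-adjoint positive-definite operator on a finite-dimensional real inner
product space `E` and `φ : ℝ → ℝ` twice continuously differentiable with `φ'(x) ≠ 0` and
`−φ''(x)/|φ'(x)| > ε₀ > 0` for all `x ≥ x₀`. For `W(a) = φ(⟪a, Ha⟫)`, whose gradient is
`2φ'(⟪a,Ha⟫) • Ha`, every `W`-monotone set `Ξ` (nonnegative Bregman cost on `Ξ × Ξ`) is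
bounded. -/
theorem stmt12
    {E : Type*} [NormedAddCommGroup E] [InnerProductSpace ℝ E] [FiniteDimensional ℝ E]
    (H : E →ₗ[ℝ] E) (hsym : H.IsSymmetric)
    (hpos : ∀ x : E, x ≠ 0 → 0 < ⟪x, H x⟫)
    (φ : ℝ → ℝ) (hφ : ContDiff ℝ 2 φ)
    (ε₀ : ℝ) (hε₀ : 0 < ε₀) (x₀ : ℝ)
    (hconc : ∀ x : ℝ, x₀ ≤ x →
      deriv φ x ≠ 0 ∧ ε₀ < -(deriv (deriv φ) x) / |deriv φ x|) :
    ∀ Ξ : Set E,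
      (∀ a ∈ Ξ, ∀ b ∈ Ξ,
        0 ≤ φ ⟪b, H b⟫ - φ ⟪a, H a⟫ + ⟪(2 * deriv φ ⟪a, H a⟫) • H a, a - b⟫) →
      Bornology.IsBounded Ξ := by
  intro Ξ hΞ
  by_contra hunb
  obtain ⟨x₁, hx₁⟩ := exists_forall_ge_eventually_sub_add_two_mul_deriv_mul_neg hε₀
    (hφ.differentiable two_ne_zero) ((hφ.deriv' (n := 1)).differentiable one_ne_zero)
    (fun x hx => (hconc x hx).1) fun x hx => by
      have := (lt_div_iff₀ (abs_pos.2 (hconc x hx).1)).1 (hconc x hx).2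
      linarith
  have hcoer := H.tendsto_inner_map_self_cobounded hpos
  obtain ⟨b, hb, hbx₁⟩ := hcoer.exists_mem_ge_of_not_isBounded hunb x₁
  obtain ⟨S, hS⟩ := (hx₁ _ hbx₁).exists_forall_of_atTop
  obtain ⟨a, ha, haS⟩ := hcoer.exists_mem_ge_of_not_isBounded hunb (max S (4 * ⟪b, H b⟫))
  have hnonneg : ∀ x, 0 ≤ ⟪x, H x⟫ := fun x => by
    rcases eq_or_ne x 0 with rfl | hx
    exacts [by simp, (hpos x hx).le]
  have hab := abs_le.1 (hsym.abs_inner_le hnonneg a b)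
  have hmono := hΞ a ha b hb
  rw [real_inner_smul_left, inner_sub_right, real_inner_comm a (H a)] at hmono
  -- `y = q a - ⟪H a, b⟫` lies in `[q a / 2, 2 q a]` because `q a ≥ 4 q b`
  refine (hS _ ((le_max_left _ _).trans haS) (⟪a, H a⟫ - ⟪H a, b⟫) ⟨?_, ?_⟩).not_ge hmono
  all_goals linarith [le_max_right S (4 * ⟪b, H b⟫), hnonneg a, hnonneg b]
end

section
/- Let E be a finite-dimensional real inner product space with dim E ≥ 1, φ : ℝ → ℝ differentiable, and β > 0 with φ'(β²) > 0. Define W(a) = φ(‖a‖²) and the Bregman cost c(a,b) = φ(‖b‖²) − φ(‖a‖²) + 2φ'(‖a‖²)(‖a‖² − ⟪a, b⟫). Then for every b ∈ E and every a ∈ E with ‖a‖ = β: c(a,b) ≥ φ(‖b‖²) − φ(β²) + 2φ'(β²)·β·(β − ‖b‖). Moreover, if b ≠ 0 then equality holds at a = (β/‖b‖)·b, and if b = 0 then c(a,b) equals the right-hand side for every a with ‖a‖ = β. In particular, the Bregman projection of b ≠ 0 onto the sphere {a : ‖a‖ = β} is the radial projection (β/‖b‖)·b. -/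
open scoped RealInnerProductSpace

/-!
On the sphere `‖a‖ = β` the terms `φ(‖a‖²)` and `φ'(‖a‖²)` are constant, so the cost minus the
claimed lower bound is `2 φ'(β²) (β ‖b‖ - ⟪a, b⟫)`. By Cauchy–Schwarz this is nonnegative when
`φ'(β²) ≥ 0`, and it vanishes exactly when `⟪a, b⟫ = β ‖b‖`, which the radial projection
`(β / ‖b‖) • b` achieves (and every `a` achieves when `b = 0`).
-/

section RadialBregman

variable {E : Type*} [NormedAddCommGroup E] [InnerProductSpace ℝ E]

lemma radialBregman_sub_eq (φ φ' : ℝ → ℝ) {a : E} (b : E) {β : ℝ} (ha : ‖a‖ = β) :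
    (φ (‖b‖ ^ 2) - φ (‖a‖ ^ 2) + 2 * φ' (‖a‖ ^ 2) * (‖a‖ ^ 2 - ⟪a, b⟫))
      - (φ (‖b‖ ^ 2) - φ (β ^ 2) + 2 * φ' (β ^ 2) * β * (β - ‖b‖))
      = 2 * φ' (β ^ 2) * (β * ‖b‖ - ⟪a, b⟫) := by
  subst ha
  ring

lemma inner_le_mul_norm_of_norm_eq {a : E} (b : E) {β : ℝ} (ha : ‖a‖ = β) :
    ⟪a, b⟫ ≤ β * ‖b‖ :=
  ha ▸ real_inner_le_norm a b

lemma norm_div_norm_smul_self {β : ℝ} (hβ : 0 ≤ β) {b : E} (hb : b ≠ 0) :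
    ‖(β / ‖b‖) • b‖ = β := by
  rw [div_eq_mul_inv]
  exact norm_smul_inv_norm' (𝕜 := ℝ) hβ hb

lemma inner_div_norm_smul_self (β : ℝ) (b : E) : ⟪(β / ‖b‖) • b, b⟫ = β * ‖b‖ := by
  rcases eq_or_ne b 0 with rfl | hb
  · simp
  · have hb' : ‖b‖ ≠ 0 := norm_ne_zero_iff.mpr hb
    rw [real_inner_smul_self_left]
    field_simp

end RadialBregman

theorem stmt13_general
    {E : Type*} [NormedAddCommGroup E] [InnerProductSpace ℝ E]
    (φ : ℝ → ℝ)
    (β : ℝ) (hβ : 0 < β) (hφ' : 0 < deriv φ (β ^ 2))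
    (c : E → E → ℝ)
    (hc : ∀ a b : E,
      c a b = φ (‖b‖ ^ 2) - φ (‖a‖ ^ 2) + 2 * deriv φ (‖a‖ ^ 2) * (‖a‖ ^ 2 - ⟪a, b⟫)) :
    ∀ b : E,
      (∀ a : E, ‖a‖ = β →
        φ (‖b‖ ^ 2) - φ (β ^ 2) + 2 * deriv φ (β ^ 2) * β * (β - ‖b‖) ≤ c a b) ∧
      (b ≠ 0 →
        c ((β / ‖b‖) • b) b
          = φ (‖b‖ ^ 2) - φ (β ^ 2) + 2 * deriv φ (β ^ 2) * β * (β - ‖b‖)) ∧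
      (b = 0 → ∀ a : E, ‖a‖ = β →
        c a b = φ (‖b‖ ^ 2) - φ (β ^ 2) + 2 * deriv φ (β ^ 2) * β * (β - ‖b‖)) := by
  intro b
  refine ⟨fun a ha => ?_, fun hb => ?_, fun hb a ha => ?_⟩
  · have hgap := radialBregman_sub_eq φ (deriv φ) b ha
    have hgap_nonneg :=
      mul_nonneg hφ'.le (sub_nonneg.mpr (inner_le_mul_norm_of_norm_eq b ha))
    rw [hc]
    linarith
  · have hgap := radialBregman_sub_eq φ (deriv φ) b (norm_div_norm_smul_self hβ.le hb)
    rw [hc, inner_div_norm_smul_self]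
    rw [inner_div_norm_smul_self] at hgap
    linarith
  · have hgap := radialBregman_sub_eq φ (deriv φ) b ha
    rw [hb, inner_zero_right, norm_zero] at hgap
    rw [hc, hb, inner_zero_right, norm_zero]
    linarith

/-- **Bregman projection onto a sphere is radial.**
For `W(a) = φ(‖a‖²)` with `φ` differentiable, `β > 0`, `φ'(β²) > 0`, and the Bregman cost
`c(a,b) = φ(‖b‖²) − φ(‖a‖²) + 2φ'(‖a‖²)(‖a‖² − ⟪a,b⟫)`, every point `a` of the sphere of
radius `β` satisfies `c(a,b) ≥ φ(‖b‖²) − φ(β²) + 2φ'(β²)β(β − ‖b‖)`; for `b ≠ 0` equality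
holds at the radial projection `a = (β/‖b‖) • b`, and for `b = 0` equality holds at every
point of the sphere. -/
theorem stmt13
    {E : Type*} [NormedAddCommGroup E] [InnerProductSpace ℝ E] [FiniteDimensional ℝ E]
    (hdim : 1 ≤ Module.finrank ℝ E)
    (φ : ℝ → ℝ) (hφ : Differentiable ℝ φ)
    (β : ℝ) (hβ : 0 < β) (hφ' : 0 < deriv φ (β ^ 2))
    (c : E → E → ℝ)
    (hc : ∀ a b : E,
      c a b = φ (‖b‖ ^ 2) - φ (‖a‖ ^ 2) + 2 * deriv φ (‖a‖ ^ 2) * (‖a‖ ^ 2 - ⟪a, b⟫)) :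
    ∀ b : E,
      (∀ a : E, ‖a‖ = β →
        φ (‖b‖ ^ 2) - φ (β ^ 2) + 2 * deriv φ (β ^ 2) * β * (β - ‖b‖) ≤ c a b) ∧
      (b ≠ 0 →
        c ((β / ‖b‖) • b) b
          = φ (‖b‖ ^ 2) - φ (β ^ 2) + 2 * deriv φ (β ^ 2) * β * (β - ‖b‖)) ∧
      (b = 0 → ∀ a : E, ‖a‖ = β →
        c a b = φ (‖b‖ ^ 2) - φ (β ^ 2) + 2 * deriv φ (β ^ 2) * β * (β - ‖b‖)) :=
  stmt13_general φ β hβ hφ' c hc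
end

section
/- Let E be a finite-dimensional real inner product space with dim E ≥ 1, and let μ₀ be a Borel probability measure on E with μ₀({0}) = 0 that is invariant under every linear isometry of E. Let ψ : ℝ → ℝ be measurable with ψ ≥ 0, define g(ω) = ψ(‖ω‖²)·ω, assume ω ↦ ‖g(ω)‖ is μ₀-integrable, and set β = ∫ ‖g(ω)‖ dμ₀(ω) > 0. Let φ : ℝ → ℝ be differentiable with φ'(β²) > 0, set W(a) = φ(‖a‖²), assume ω ↦ φ(‖g(ω)‖²) is μ₀-integrable, and assume that for every b ∈ E with ‖b‖ ≤ sup_{x ≥ 0} x·ψ(x²): φ(‖b‖²) − φ(β²) + 2φ'(β²)·β·(β − ‖b‖) ≤ 0. Define a(ω) = (β/‖ω‖)·ω for ω ≠ 0 (and a(0) = 0). Then for every measurable b : E → E that equals μ₀-a.e. the conditional expectation of g given the σ-algebra generated by b, and such that ω ↦ φ(‖b(ω)‖²) and ω ↦ ⟪2φ'(‖b(ω)‖²)·b(ω), b(ω) − g(ω)⟫ are μ₀-integrable, one has ∫ W(a(ω)) dμ₀(ω) ≥ ∫ W(b(ω)) dμ₀(ω). -/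
open MeasureTheory
open scoped RealInnerProductSpace

/-!
Conditional Jensen gives `‖b‖ ≤ E[‖g‖ | σ(b)]` almost everywhere, hence `E‖b‖ ≤ E‖g‖ = β`, and
also `‖b‖ ≤ sup ‖g‖ ≤ sup_{x ≥ 0} x ψ(x²)`, so the tangent-line condition applies pointwise to `b`:
`φ(‖b‖²) ≤ φ(β²) + 2φ'(β²)β(‖b‖ − β)`. Integrating, the slope being nonnegative,
`E φ(‖b‖²) ≤ φ(β²)`, while the radial policy has `‖a‖ = β` almost surely and so attains `φ(β²)`.
-/

section ConditionalExpectation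

variable {α E : Type*} {m m₀ : MeasurableSpace α} {μ : Measure α}
  [NormedAddCommGroup E] [NormedSpace ℝ E] [CompleteSpace E]

theorem ae_coe_norm_condExp_le {f : α → E} {S : EReal} (hf : ∀ x, (‖f x‖ : EReal) ≤ S) :
    ∀ᵐ x ∂μ, (‖μ[f | m] x‖ : EReal) ≤ S := by
  induction S using EReal.rec with
  | bot => exact .of_forall fun x => absurd (hf x) (by simp)
  | coe R =>
    filter_upwards [ae_bdd_norm_condExp_of_ae_bdd_norm (m := m)
      (.of_forall fun x => EReal.coe_le_coe_iff.1 (hf x))] with x hx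
    exact_mod_cast hx
  | top => exact .of_forall fun _ => le_top

end ConditionalExpectation

theorem integral_le_of_ae_le_add_mul_sub {α : Type*} [MeasurableSpace α] {μ : Measure α}
    [IsProbabilityMeasure μ] {u v : α → ℝ} {k c β : ℝ} (hc : 0 ≤ c) (hu : Integrable u μ)
    (hv : Integrable v μ) (hvu : ∀ᵐ x ∂μ, v x ≤ k + c * (u x - β)) (hβ : ∫ x, u x ∂μ ≤ β) :
    ∫ x, v x ∂μ ≤ k := by
  have hu_sub : Integrable (fun x => c * (u x - β)) μ := (hu.sub (integrable_const β)).const_mul c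
  calc ∫ x, v x ∂μ ≤ ∫ x, (k + c * (u x - β)) ∂μ :=
        integral_mono_ae hv ((integrable_const k).add hu_sub) hvu
    _ = k + c * (∫ x, u x ∂μ - β) := by
        rw [integral_add (integrable_const k) hu_sub, integral_const_mul,
          integral_sub hu (integrable_const β)]
        simp
    _ ≤ k := by nlinarith

theorem stmt14_general
    {E : Type*} [NormedAddCommGroup E] [InnerProductSpace ℝ E] [FiniteDimensional ℝ E]
    [MeasurableSpace E]
    (μ₀ : Measure E) [IsProbabilityMeasure μ₀]
    (hzero : μ₀ {0} = 0)
    (ψ : ℝ → ℝ) (hψnonneg : ∀ x : ℝ, 0 ≤ ψ x)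
    (g : E → E) (hg : ∀ ω : E, g ω = ψ (‖ω‖ ^ 2) • ω)
    (β : ℝ) (hβdef : β = ∫ ω, ‖g ω‖ ∂μ₀) (hβpos : 0 < β)
    (φ : ℝ → ℝ) (hφ' : 0 < deriv φ (β ^ 2))
    (htangent : ∀ b : E,
      (‖b‖ : EReal) ≤ ⨆ (x : ℝ) (_ : 0 ≤ x), ((x * ψ (x ^ 2) : ℝ) : EReal) →
      φ (‖b‖ ^ 2) - φ (β ^ 2) + 2 * deriv φ (β ^ 2) * β * (β - ‖b‖) ≤ 0)
    (a : E → E)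
    (ha : ∀ ω : E, ω ≠ 0 → a ω = (β / ‖ω‖) • ω) :
    ∀ b : E → E, Measurable b →
      b =ᵐ[μ₀] μ₀[g | MeasurableSpace.comap b inferInstance] →
      Integrable (fun ω => φ (‖b ω‖ ^ 2)) μ₀ →
      Integrable (fun ω => ⟪(2 * deriv φ (‖b ω‖ ^ 2)) • b ω, b ω - g ω⟫) μ₀ →
      ∫ ω, φ (‖b ω‖ ^ 2) ∂μ₀ ≤ ∫ ω, φ (‖a ω‖ ^ 2) ∂μ₀ := by
  intro b _ hb hφb _
  have hb_norm : (fun ω => ‖b ω‖) =ᵐ[μ₀]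
      fun ω => ‖μ₀[g | MeasurableSpace.comap b inferInstance] ω‖ :=
    hb.fun_comp norm
  have hg_le : ∀ ω, (‖g ω‖ : EReal) ≤ ⨆ (x : ℝ) (_ : 0 ≤ x), ((x * ψ (x ^ 2) : ℝ) : EReal) :=
    fun ω => le_iSup₂_of_le ‖ω‖ (norm_nonneg ω) <| by
      rw [hg, norm_smul, Real.norm_of_nonneg (hψnonneg _), mul_comm]
  have ha_norm : ∀ᵐ ω ∂μ₀, ‖a ω‖ = β := by
    filter_upwards [measure_eq_zero_iff_ae_notMem.1 hzero] with ω hω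
    rw [ha ω hω, norm_smul, Real.norm_of_nonneg (by positivity),
      div_mul_cancel₀ _ (norm_ne_zero_iff.2 hω)]
  have ha_integral : ∫ ω, φ (‖a ω‖ ^ 2) ∂μ₀ = φ (β ^ 2) := by
    rw [integral_congr_ae (ha_norm.mono fun ω h => by rw [h]), integral_const, probReal_univ,
      one_smul]
  rw [ha_integral]
  have hb_integral : ∫ ω, ‖b ω‖ ∂μ₀ ≤ β :=
    hβdef ▸ (integral_congr_ae hb_norm).trans_le (integral_norm_condExp_le g)
  refine integral_le_of_ae_le_add_mul_sub (c := 2 * deriv φ (β ^ 2) * β) (by positivity)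
    (integrable_condExp.norm.congr hb_norm.symm) hφb ?_ hb_integral
  filter_upwards [hb, ae_coe_norm_condExp_le (μ := μ₀)
    (m := MeasurableSpace.comap b inferInstance) hg_le] with ω hbω hω
  linarith [htangent (b ω) (hbω ▸ hω)]

/-- **Revealing only the direction is optimal: the sphere policy.**
Let `μ₀` be a rotation-invariant Borel probability measure on a finite-dimensional real inner
product space `E` (`dim E ≥ 1`) with `μ₀ {0} = 0`. Let `g(ω) = ψ(‖ω‖²) • ω` with `ψ ≥ 0` and
`‖g‖` integrable, `β = ∫ ‖g ω‖ ∂μ₀ > 0`, and let `φ` be differentiable with `φ'(β²) > 0`,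
`φ(‖g(·)‖²)` integrable, and the tangent-line condition
`φ(‖b‖²) − φ(β²) + 2φ'(β²)β(β − ‖b‖) ≤ 0` for every `b` with
`‖b‖ ≤ sup_{x ≥ 0} x ψ(x²)`. Then the radial policy `a(ω) = (β/‖ω‖) • ω` (with `a 0 = 0`)
yields an expected value of `W = φ(‖·‖²)` at least that of any feasible policy `b`
(measurable, equal a.e. to the conditional expectation of `g` given `σ(b)`, with the stated
integrability). -/
theorem stmt14
    {E : Type*} [NormedAddCommGroup E] [InnerProductSpace ℝ E] [FiniteDimensional ℝ E]
    [MeasurableSpace E] [BorelSpace E]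
    (hdim : 1 ≤ Module.finrank ℝ E)
    (μ₀ : Measure E) [IsProbabilityMeasure μ₀]
    (hzero : μ₀ {0} = 0)
    (hrot : ∀ f : E ≃ₗᵢ[ℝ] E, μ₀.map f = μ₀)
    (ψ : ℝ → ℝ) (hψmeas : Measurable ψ) (hψnonneg : ∀ x : ℝ, 0 ≤ ψ x)
    (g : E → E) (hg : ∀ ω : E, g ω = ψ (‖ω‖ ^ 2) • ω)
    (hgint : Integrable (fun ω => ‖g ω‖) μ₀)
    (β : ℝ) (hβdef : β = ∫ ω, ‖g ω‖ ∂μ₀) (hβpos : 0 < β)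
    (φ : ℝ → ℝ) (hφ : Differentiable ℝ φ) (hφ' : 0 < deriv φ (β ^ 2))
    (hφgint : Integrable (fun ω => φ (‖g ω‖ ^ 2)) μ₀)
    (htangent : ∀ b : E,
      (‖b‖ : EReal) ≤ ⨆ (x : ℝ) (_ : 0 ≤ x), ((x * ψ (x ^ 2) : ℝ) : EReal) →
      φ (‖b‖ ^ 2) - φ (β ^ 2) + 2 * deriv φ (β ^ 2) * β * (β - ‖b‖) ≤ 0)
    (a : E → E) (ha0 : a 0 = 0)
    (ha : ∀ ω : E, ω ≠ 0 → a ω = (β / ‖ω‖) • ω) :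
    ∀ b : E → E, Measurable b →
      b =ᵐ[μ₀] μ₀[g | MeasurableSpace.comap b inferInstance] →
      Integrable (fun ω => φ (‖b ω‖ ^ 2)) μ₀ →
      Integrable (fun ω => ⟪(2 * deriv φ (‖b ω‖ ^ 2)) • b ω, b ω - g ω⟫) μ₀ →
      ∫ ω, φ (‖b ω‖ ^ 2) ∂μ₀ ≤ ∫ ω, φ (‖a ω‖ ^ 2) ∂μ₀ :=
  stmt14_general μ₀ hzero ψ hψnonneg g hg β hβdef hβpos φ hφ' htangent a ha
end

section
/- Let E be a finite-dimensional real inner product space, μ a Borel probability measure on E with ∫ ‖x‖ dμ(x) < ∞, and A : E → E a continuous linear map. Suppose that the conditional expectation of the identity map x ↦ x given the σ-algebra generated by x ↦ A(x) equals x ↦ A(x) μ-almost everywhere. Then A(A(x)) = A(x) for μ-almost every x. If in addition the topological support of μ spans E, then A ∘ A = A, i.e. A is a linear projection. -/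
/-!
Apply `A` to the identity `A x = E[x | A x]`: since conditional expectation commutes with
continuous linear maps, `A (A x) = E[A x | A x]`, and `A x` is measurable for the conditioning
σ-algebra, so the right-hand side is `A x` itself. The two continuous maps `A ∘ A` and `A` then
agree almost everywhere, hence on the closed support of `μ`, hence on its span.
-/

open MeasureTheory

namespace MeasureTheory

theorem Measure.eqOn_support_of_ae_eq {X Y : Type*} [TopologicalSpace X] [MeasurableSpace X]
    [TopologicalSpace Y] [T2Space Y] {μ : Measure X} {f g : X → Y}
    (hf : Continuous f) (hg : Continuous g) (hfg : f =ᵐ[μ] g) : Set.EqOn f g μ.support :=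
  Measure.support_subset_of_isClosed (isClosed_eq hf hg) hfg

theorem ae_idem_of_condExp_eq {Ω E : Type*} {m m₀ : MeasurableSpace Ω} {μ : Measure Ω}
    [NormedAddCommGroup E] [NormedSpace ℝ E] [CompleteSpace E]
    (hm : m ≤ m₀) [SigmaFinite (μ.trim hm)] {X : Ω → E} (hX : Integrable X μ) (A : E →L[ℝ] E)
    (hAX : StronglyMeasurable[m] (A ∘ X)) (hcond : A ∘ X =ᵐ[μ] μ[X | m]) :
    ∀ᵐ ω ∂μ, A (A (X ω)) = A (X ω) :=
  calc A ∘ A ∘ X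
      =ᵐ[μ] A ∘ μ[X | m] := hcond.fun_comp A
    _ =ᵐ[μ] μ[A ∘ X | m] := A.comp_condExp_comm hX
    _ = A ∘ X := condExp_of_stronglyMeasurable hm hAX (A.integrable_comp hX)

end MeasureTheory

theorem ContinuousLinearMap.eq_of_ae_eq_of_span_support_eq_top {R M N : Type*} [Semiring R]
    [TopologicalSpace M] [AddCommMonoid M] [Module R M] [MeasurableSpace M]
    [TopologicalSpace N] [T2Space N] [AddCommMonoid N] [Module R N]
    {μ : Measure M} (hspan : Submodule.span R μ.support = ⊤) {f g : M →L[R] N}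
    (hfg : ⇑f =ᵐ[μ] g) : f = g :=
  coe_injective <| LinearMap.ext_on hspan <|
    Measure.eqOn_support_of_ae_eq f.continuous g.continuous hfg

/-- **Linear conditional expectations force a projection.**
Let `μ` be a Borel probability measure with integrable norm on a finite-dimensional real inner
product space `E`, and `A : E → E` a continuous linear map such that the conditional
expectation of the identity given the σ-algebra generated by `x ↦ A x` equals `x ↦ A x`
`μ`-a.e. Then `A (A x) = A x` for `μ`-a.e. `x`; and if the topological support of `μ`
(the set of points all of whose neighborhoods have positive measure) spans `E`, then
`A ∘ A = A`, i.e. `A` is a linear projection. -/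
theorem stmt15
    {E : Type*} [NormedAddCommGroup E] [InnerProductSpace ℝ E] [FiniteDimensional ℝ E]
    [MeasurableSpace E] [BorelSpace E]
    (μ : Measure E) [IsProbabilityMeasure μ]
    (hint : Integrable (fun x => ‖x‖) μ)
    (A : E →L[ℝ] E)
    (hcond : (fun x => A x)
      =ᵐ[μ] μ[(fun x => x) | MeasurableSpace.comap (fun x => A x) inferInstance]) :
    (∀ᵐ x ∂μ, A (A x) = A x) ∧
    (Submodule.span ℝ {x : E | ∀ U ∈ nhds x, μ U ≠ 0} = ⊤ →
      ∀ x : E, A (A x) = A x) := by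
  have hA : Measurable[MeasurableSpace.comap A inferInstance] A := comap_measurable A
  have hidem : ∀ᵐ x ∂μ, A (A x) = A x :=
    ae_idem_of_condExp_eq A.measurable.comap_le
      ((integrable_norm_iff aestronglyMeasurable_id).mp hint) A hA.stronglyMeasurable hcond
  refine ⟨hidem, fun hspan x => ?_⟩
  have hsupport : {x : E | ∀ U ∈ nhds x, μ U ≠ 0} = μ.support := by
    ext y
    simp only [Set.mem_ofPred_eq, Measure.mem_support_iff_forall, pos_iff_ne_zero]
  rw [hsupport] at hspan
  have hproj : A.comp A = A :=
    ContinuousLinearMap.eq_of_ae_eq_of_span_support_eq_top hspan hidem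
  exact congrArg (· x) hproj
end

section
/- Let N ≥ 1, and let g, d : {1,…,N} → ℝ with g(i) ≠ 0 and d(i) ≠ 0 for all i. Let B be the symmetric (N+1)×(N+1) real matrix with B(0,0) = 0, B(0,i) = B(i,0) = g(i) for 1 ≤ i ≤ N, B(i,i) = d(i) for 1 ≤ i ≤ N, and all other entries zero. Set q = −∑_{i=1}^N g(i)²/d(i) and assume q ≠ 0. Then the number of positive eigenvalues of B (counted with multiplicity) equals #{i : d(i) > 0} + 1 if q > 0, and equals #{i : d(i) > 0} if q < 0. -/
/-!
Sylvester's law of inertia: if a real quadratic form is `∑ D i * cᵢ(x)²` in the coordinates `cᵢ`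
of one basis and `∑ D' j * c'ⱼ(x)²` in those of another, then `D` and `D'` have the same number
of positive entries, because the span of the `D`-positive basis vectors (where the form is
positive definite) meets the span of the `D'`-nonpositive ones only in `0`. The orthonormal
eigenbasis of `B` diagonalizes `x ↦ xᵀBx` with the eigenvalues as coefficients, and completing
the square with respect to `x₀` gives
  `xᵀBx = q x₀² + ∑ dᵢ (x_{i+1} + (gᵢ/dᵢ) x₀)²`,
a diagonal form in the coordinates of a shear, with coefficients `q, d₁, …, d_N`.
-/

open Matrix Finset Module Submodule

theorem Module.Basis.finrank_span_image_finset {ι R M : Type*} [Ring R] [Nontrivial R]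
    [StrongRankCondition R] [AddCommGroup M] [Module R M] (b : Basis ι R M) (s : Finset ι) :
    finrank R (span R (b '' s)) = #s := by
  rw [Set.image_eq_range]
  exact (finrank_span_eq_card (b.linearIndependent.comp _ Subtype.val_injective)).trans
    (Fintype.card_coe s)

namespace Module.Basis

variable {E ι κ : Type*} [AddCommGroup E] [Module ℝ E] [Fintype ι] [Fintype κ]

def Diagonalizes (b : Basis ι ℝ E) (Q : E → ℝ) (D : ι → ℝ) : Prop :=
  ∀ x, Q x = ∑ i, D i * b.repr x i ^ 2

variable (b : Basis ι ℝ E) (D : ι → ℝ) {x : E}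

theorem sum_mul_repr_sq_pos_of_mem_span (hx : x ∈ span ℝ (b '' {i | 0 < D i})) (hx0 : x ≠ 0) :
    0 < ∑ i, D i * b.repr x i ^ 2 := by
  have hD : ∀ i, b.repr x i ≠ 0 → 0 < D i := fun i hi => by
    simpa using b.mem_span_image.mp hx (Finsupp.mem_support_iff.mpr hi)
  obtain ⟨i, hi⟩ : ∃ i, b.repr x i ≠ 0 := by
    by_contra! h
    exact hx0 (b.repr.map_eq_zero_iff.mp (Finsupp.ext h))
  refine sum_pos' (fun j _ => ?_) ⟨i, mem_univ i, by have := hD i hi; positivity⟩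
  by_cases hj : b.repr x j = 0
  · simp [hj]
  · have := hD j hj; positivity

theorem sum_mul_repr_sq_nonpos_of_mem_span (hx : x ∈ span ℝ (b '' {i | D i ≤ 0})) :
    ∑ i, D i * b.repr x i ^ 2 ≤ 0 := by
  refine sum_nonpos fun i _ => ?_
  by_cases hi : b.repr x i = 0
  · simp [hi]
  · have : D i ≤ 0 := by simpa using b.mem_span_image.mp hx (Finsupp.mem_support_iff.mpr hi)
    exact mul_nonpos_of_nonpos_of_nonneg this (sq_nonneg _)

variable {b D} {Q : E → ℝ} {c : Basis κ ℝ E} {D' : κ → ℝ}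

theorem Diagonalizes.card_pos_le (hb : b.Diagonalizes Q D) (hc : c.Diagonalizes Q D') :
    #{i | 0 < D i} ≤ #{j | 0 < D' j} := by
  classical
  have : FiniteDimensional ℝ E := c.finiteDimensional_of_finite
  have hdisj : Disjoint (span ℝ (b '' ↑({i | 0 < D i} : Finset ι)))
      (span ℝ (c '' ↑({j | D' j ≤ 0} : Finset κ))) := by
    refine disjoint_def.mpr fun x hxb hxc => by_contra fun hx0 => ?_
    have hpos := b.sum_mul_repr_sq_pos_of_mem_span D (by simpa using hxb) hx0
    have hnonpos := c.sum_mul_repr_sq_nonpos_of_mem_span D' (by simpa using hxc)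
    linarith [hb x, hc x]
  have hdim := finrank_add_finrank_le_of_disjoint hdisj
  rw [b.finrank_span_image_finset, c.finrank_span_image_finset, finrank_eq_card_basis c] at hdim
  have hsplit := card_filter_add_card_filter_not (s := univ) fun j => 0 < D' j
  simp only [not_lt, card_univ] at hsplit
  omega

theorem Diagonalizes.card_pos_eq (hb : b.Diagonalizes Q D) (hc : c.Diagonalizes Q D') :
    #{i | 0 < D i} = #{j | 0 < D' j} :=
  le_antisymm (hb.card_pos_le hc) (hc.card_pos_le hb)

end Module.Basis

namespace Matrix.IsHermitian

variable {n : Type*} [Fintype n] [DecidableEq n] {A : Matrix n n ℝ} (hA : A.IsHermitian)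

noncomputable def eigenvectorBasisFun : Basis n ℝ (n → ℝ) :=
  hA.eigenvectorBasis.toBasis.map (WithLp.linearEquiv 2 ℝ (n → ℝ))

theorem eigenvectorBasisFun_apply (i : n) :
    hA.eigenvectorBasisFun i = ⇑(hA.eigenvectorBasis i) := by
  simp [eigenvectorBasisFun]

theorem eigenvectorBasisFun_repr_apply (x : n → ℝ) (i : n) :
    hA.eigenvectorBasisFun.repr x i = ⇑(hA.eigenvectorBasis i) ⬝ᵥ x := by
  simp [eigenvectorBasisFun, OrthonormalBasis.repr_apply_apply, PiLp.inner_apply, dotProduct,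
    mul_comm]

theorem eigenvectorBasisFun_repr_mulVec (x : n → ℝ) (i : n) :
    hA.eigenvectorBasisFun.repr (A *ᵥ x) i =
      hA.eigenvalues i * hA.eigenvectorBasisFun.repr x i := by
  have hAt : Aᵀ = A := by simpa using hA.eq
  rw [eigenvectorBasisFun_repr_apply, eigenvectorBasisFun_repr_apply, dotProduct_mulVec,
    ← mulVec_transpose, hAt, hA.mulVec_eigenvectorBasis, smul_dotProduct, smul_eq_mul]

theorem eigenvectorBasisFun_diagonalizes :
    hA.eigenvectorBasisFun.Diagonalizes (fun x => x ⬝ᵥ A *ᵥ x) hA.eigenvalues := fun x =>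
  calc x ⬝ᵥ A *ᵥ x
      = (∑ i, hA.eigenvectorBasisFun.repr x i • hA.eigenvectorBasisFun i) ⬝ᵥ A *ᵥ x := by
        rw [hA.eigenvectorBasisFun.sum_repr]
    _ = ∑ i, hA.eigenvectorBasisFun.repr x i * hA.eigenvectorBasisFun.repr (A *ᵥ x) i := by
        simp only [sum_dotProduct, smul_dotProduct, eigenvectorBasisFun_apply,
          eigenvectorBasisFun_repr_apply, smul_eq_mul]
    _ = ∑ i, hA.eigenvalues i * hA.eigenvectorBasisFun.repr x i ^ 2 := by
        simp only [eigenvectorBasisFun_repr_mulVec]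
        exact sum_congr rfl fun i _ => by ring

theorem card_pos_eigenvalues_eq {κ : Type*} [Fintype κ] {b : Basis κ ℝ (n → ℝ)} {D : κ → ℝ}
    (hb : b.Diagonalizes (fun x => x ⬝ᵥ A *ᵥ x) D) :
    #{i | 0 < hA.eigenvalues i} = #{j | 0 < D j} :=
  hA.eigenvectorBasisFun_diagonalizes.card_pos_eq hb

end Matrix.IsHermitian

section Arrowhead

variable {N : ℕ}

noncomputable def shearBasis (a : Fin N → ℝ) : Basis (Fin (N + 1)) ℝ (Fin (N + 1) → ℝ) :=
  .ofEquivFun (LinearEquiv.transvection (f := LinearMap.proj 0) (v := Fin.cons 0 a) (by simp))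

theorem shearBasis_repr_zero (a : Fin N → ℝ) (x : Fin (N + 1) → ℝ) :
    (shearBasis a).repr x 0 = x 0 := by
  simp [shearBasis, LinearMap.transvection.apply]

theorem shearBasis_repr_succ (a : Fin N → ℝ) (x : Fin (N + 1) → ℝ) (i : Fin N) :
    (shearBasis a).repr x i.succ = x i.succ + x 0 * a i := by
  simp [shearBasis, LinearMap.transvection.apply]

variable (g d : Fin N → ℝ) {B : Matrix (Fin (N + 1)) (Fin (N + 1)) ℝ}
  (hB00 : B 0 0 = 0) (hB0i : ∀ i : Fin N, B 0 i.succ = g i) (hBi0 : ∀ i : Fin N, B i.succ 0 = g i)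
  (hBii : ∀ i : Fin N, B i.succ i.succ = d i) (hBoff : ∀ i j : Fin N, i ≠ j → B i.succ j.succ = 0)
include hB00 hB0i hBi0 hBii hBoff

theorem dotProduct_mulVec_eq_of_arrowhead (x : Fin (N + 1) → ℝ) :
    x ⬝ᵥ B *ᵥ x = ∑ i, (2 * g i * x 0 * x i.succ + d i * x i.succ ^ 2) := by
  have h0 : (B *ᵥ x) 0 = ∑ i, g i * x i.succ := by
    simp [mulVec, dotProduct, Fin.sum_univ_succ, hB00, hB0i]
  have hsucc (j : Fin N) : (B *ᵥ x) j.succ = g j * x 0 + d j * x j.succ := by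
    rw [mulVec, dotProduct, Fin.sum_univ_succ, hBi0,
      sum_eq_single j (fun i _ hij => by rw [hBoff j i hij.symm, zero_mul]) (by simp), hBii]
  rw [dotProduct, Fin.sum_univ_succ, h0, mul_sum, ← sum_add_distrib]
  exact sum_congr rfl fun i _ => by rw [hsucc]; ring

theorem shearBasis_diagonalizes_of_arrowhead (hd : ∀ i, d i ≠ 0) :
    (shearBasis (g / d)).Diagonalizes (fun x => x ⬝ᵥ B *ᵥ x)
      (Fin.cons (-∑ i, g i ^ 2 / d i) d) := fun x => by
  beta_reduce
  rw [dotProduct_mulVec_eq_of_arrowhead g d hB00 hB0i hBi0 hBii hBoff, Fin.sum_univ_succ]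
  simp only [Fin.cons_zero, Fin.cons_succ, shearBasis_repr_zero, shearBasis_repr_succ, neg_mul,
    Pi.div_apply, sum_mul, ← sub_eq_neg_add, eq_sub_iff_add_eq, ← sum_add_distrib]
  refine sum_congr rfl fun i _ => ?_
  field_simp [hd i]
  ring

end Arrowhead

theorem stmt16_general
    (N : ℕ)
    (g d : Fin N → ℝ)
    (hd : ∀ i, d i ≠ 0)
    (B : Matrix (Fin (N + 1)) (Fin (N + 1)) ℝ)
    (hB00 : B 0 0 = 0)
    (hB0i : ∀ i : Fin N, B 0 i.succ = g i)
    (hBi0 : ∀ i : Fin N, B i.succ 0 = g i)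
    (hBii : ∀ i : Fin N, B i.succ i.succ = d i)
    (hBoff : ∀ i j : Fin N, i ≠ j → B i.succ j.succ = 0)
    (hHerm : B.IsHermitian)
    (q : ℝ) (hq : q = -∑ i : Fin N, g i ^ 2 / d i) :
    (0 < q →
      (Finset.univ.filter fun j : Fin (N + 1) => 0 < hHerm.eigenvalues j).card
        = (Finset.univ.filter fun i : Fin N => 0 < d i).card + 1) ∧
    (q < 0 →
      (Finset.univ.filter fun j : Fin (N + 1) => 0 < hHerm.eigenvalues j).card
        = (Finset.univ.filter fun i : Fin N => 0 < d i).card) := by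
  have hcount : #{j | 0 < hHerm.eigenvalues j} =
      if 0 < q then #{i | 0 < d i} + 1 else #{i | 0 < d i} := by
    rw [hHerm.card_pos_eigenvalues_eq
      (shearBasis_diagonalizes_of_arrowhead g d hB00 hB0i hBi0 hBii hBoff hd),
      Fin.card_filter_univ_succ, hq]
    simp only [Fin.cons_zero, Fin.cons_succ]
  exact ⟨fun hpos => by rw [hcount, if_pos hpos], fun hneg => by rw [hcount, if_neg hneg.not_gt]⟩

/-- **Signature of the arrowhead Hessian.**
Let `B` be the real symmetric `(N+1) × (N+1)` arrowhead matrix with zero `(0,0)`-entry, first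
row/column `g(i) ≠ 0`, diagonal `d(i) ≠ 0` and all other entries zero, and set
`q = −∑ g(i)²/d(i) ≠ 0`. Then the number of positive eigenvalues of `B` (with multiplicity)
equals `#{i : d(i) > 0} + 1` if `q > 0`, and `#{i : d(i) > 0}` if `q < 0`. -/
theorem stmt16
    (N : ℕ) (hN : 1 ≤ N)
    (g d : Fin N → ℝ)
    (hg : ∀ i, g i ≠ 0) (hd : ∀ i, d i ≠ 0)
    (B : Matrix (Fin (N + 1)) (Fin (N + 1)) ℝ)
    (hB00 : B 0 0 = 0)
    (hB0i : ∀ i : Fin N, B 0 i.succ = g i)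
    (hBi0 : ∀ i : Fin N, B i.succ 0 = g i)
    (hBii : ∀ i : Fin N, B i.succ i.succ = d i)
    (hBoff : ∀ i j : Fin N, i ≠ j → B i.succ j.succ = 0)
    (hHerm : B.IsHermitian)
    (q : ℝ) (hq : q = -∑ i : Fin N, g i ^ 2 / d i) (hq0 : q ≠ 0) :
    (0 < q →
      (Finset.univ.filter fun j : Fin (N + 1) => 0 < hHerm.eigenvalues j).card
        = (Finset.univ.filter fun i : Fin N => 0 < d i).card + 1) ∧
    (q < 0 →
      (Finset.univ.filter fun j : Fin (N + 1) => 0 < hHerm.eigenvalues j).card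
        = (Finset.univ.filter fun i : Fin N => 0 < d i).card) :=
  stmt16_general N g d hd B hB00 hB0i hBi0 hBii hBoff hHerm q hq
end

section
/- Let E be a finite-dimensional real inner product space and H : E → E a self-adjoint linear operator. Let V be the sum of the eigenspaces of H corresponding to strictly positive eigenvalues and let P be the orthogonal projection onto V. Then for every b ∈ E, the function a ↦ ⟪a − b, H(a − b)⟫ on V attains its minimum over V at a = P(b), and the minimum value equals ⟪(I − P)b, H((I − P)b)⟫, which is ≤ 0. In particular, the subspace V is E-maximal for the quadratic Bregman cost c(a,b) = ⟪a − b, H(a − b)⟫ (i.e., inf_{a ∈ V} c(a,b) ≤ 0 for every b ∈ E), and the Bregman projection onto V coincides with the orthogonal projection P. -/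
open scoped RealInnerProductSpace

/-!
Let `V` be the span of the eigenvectors of `H` with positive eigenvalue. Since `H` is symmetric,
`V` is `H`-invariant and the quadratic form `q x = ⟪x, H x⟫` is nonnegative on `V` and
nonpositive on `Vᗮ`, as one sees by expanding `q` in an orthonormal eigenbasis. Invariance and
symmetry kill the cross terms of `q` between `V` and `Vᗮ`, so writing
`a - b = (a - P b) + (P b - b)` with `a - P b ∈ V` and `P b - b ∈ Vᗮ` gives
`q (a - b) = q (a - P b) + q (P b - b) ≥ q (P b - b)`.
-/

namespace Module.End

variable {E : Type*} [NormedAddCommGroup E] [InnerProductSpace ℝ E] {T : Module.End ℝ E}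

noncomputable def positiveEigenspace (T : Module.End ℝ E) : Submodule ℝ E :=
  ⨆ (μ : ℝ) (_ : 0 < μ), eigenspace T μ

theorem eigenspace_le_positiveEigenspace {μ : ℝ} (hμ : 0 < μ) :
    eigenspace T μ ≤ positiveEigenspace T :=
  le_iSup₂ (f := fun (ν : ℝ) (_ : 0 < ν) => eigenspace T ν) μ hμ

theorem map_mem_positiveEigenspace {x : E} (hx : x ∈ positiveEigenspace T) :
    T x ∈ positiveEigenspace T := by
  suffices positiveEigenspace T ≤ (positiveEigenspace T).comap T from this hx
  refine iSup₂_le fun μ hμ y hy => ?_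
  rw [Submodule.mem_comap, mem_eigenspace_iff.mp hy]
  exact Submodule.smul_mem _ μ (eigenspace_le_positiveEigenspace hμ hy)

theorem mul_inner_sq_nonpos_of_mem_orthogonal_positiveEigenspace {μ : ℝ} {e x : E}
    (he : e ∈ eigenspace T μ) (hx : x ∈ (positiveEigenspace T)ᗮ) :
    μ * ⟪e, x⟫ ^ 2 ≤ 0 := by
  rcases le_or_gt μ 0 with hμ | hμ
  · exact mul_nonpos_of_nonpos_of_nonneg hμ (sq_nonneg _)
  · rw [Submodule.inner_right_of_mem_orthogonal (eigenspace_le_positiveEigenspace hμ he) hx]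
    simp

end Module.End

namespace LinearMap.IsSymmetric

open Module.End

variable {E : Type*} [NormedAddCommGroup E] [InnerProductSpace ℝ E] {T : E →ₗ[ℝ] E}

theorem inner_add_map_add_of_mem_orthogonal (hT : T.IsSymmetric) {K : Submodule ℝ E}
    (hK : ∀ x ∈ K, T x ∈ K) {v w : E} (hv : v ∈ K) (hw : w ∈ Kᗮ) :
    ⟪v + w, T (v + w)⟫ = ⟪v, T v⟫ + ⟪w, T w⟫ := by
  have hvw : ⟪v, T w⟫ = 0 := by
    rw [← hT v w]
    exact Submodule.inner_right_of_mem_orthogonal (hK v hv) hw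
  have hwv : ⟪w, T v⟫ = 0 := Submodule.inner_left_of_mem_orthogonal (hK v hv) hw
  rw [map_add, inner_add_left, inner_add_right, inner_add_right, hvw, hwv]
  ring

theorem eigenspace_isOrtho_positiveEigenspace (hT : T.IsSymmetric) {μ : ℝ} (hμ : μ ≤ 0) :
    eigenspace T μ ⟂ positiveEigenspace T :=
  Submodule.isOrtho_iSup_right.mpr fun _ => Submodule.isOrtho_iSup_right.mpr fun hν =>
    hT.orthogonalFamily_eigenspaces.isOrtho (hμ.trans_lt hν).ne

theorem mul_inner_sq_nonneg_of_mem_positiveEigenspace (hT : T.IsSymmetric) {μ : ℝ} {e x : E}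
    (he : e ∈ eigenspace T μ) (hx : x ∈ positiveEigenspace T) :
    0 ≤ μ * ⟪e, x⟫ ^ 2 := by
  rcases le_or_gt μ 0 with hμ | hμ
  · rw [(hT.eigenspace_isOrtho_positiveEigenspace hμ).inner_eq he hx]
    simp
  · positivity

variable [FiniteDimensional ℝ E]

theorem inner_map_self_eq_sum_eigenvalues (hT : T.IsSymmetric) {n : ℕ}
    (hn : Module.finrank ℝ E = n) (x : E) :
    ⟪x, T x⟫ = ∑ i, hT.eigenvalues hn i * ⟪hT.eigenvectorBasis hn i, x⟫ ^ 2 := by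
  rw [← (hT.eigenvectorBasis hn).sum_inner_mul_inner x (T x)]
  refine Finset.sum_congr rfl fun i _ => ?_
  rw [← hT, hT.apply_eigenvectorBasis, RCLike.ofReal_real_eq_id, id_eq, real_inner_smul_left,
    real_inner_comm x]
  ring

theorem inner_map_self_nonneg_of_mem_positiveEigenspace (hT : T.IsSymmetric) {x : E}
    (hx : x ∈ positiveEigenspace T) : 0 ≤ ⟪x, T x⟫ := by
  rw [hT.inner_map_self_eq_sum_eigenvalues rfl]
  exact Finset.sum_nonneg fun i _ => hT.mul_inner_sq_nonneg_of_mem_positiveEigenspace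
    (hT.hasEigenvector_eigenvectorBasis rfl i).1 hx

theorem inner_map_self_nonpos_of_mem_orthogonal_positiveEigenspace (hT : T.IsSymmetric)
    {x : E} (hx : x ∈ (positiveEigenspace T)ᗮ) : ⟪x, T x⟫ ≤ 0 := by
  rw [hT.inner_map_self_eq_sum_eigenvalues rfl]
  exact Finset.sum_nonpos fun i _ => mul_inner_sq_nonpos_of_mem_orthogonal_positiveEigenspace
    (hT.hasEigenvector_eigenvectorBasis rfl i).1 hx

end LinearMap.IsSymmetric

/-- **The positive eigenspace is maximal and the Bregman projection is the
orthogonal projection.** Let `H` be a self-adjoint operator on a finite-dimensional real inner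
product space `E`, `V` the sum of the eigenspaces of `H` for strictly positive eigenvalues,
and `P` the orthogonal projection onto `V`. Then for every `b`, the quadratic Bregman cost
`a ↦ ⟪a − b, H(a − b)⟫` attains its minimum over `V` at `a = P b` (which lies in `V`), and
the minimum value equals `⟪(I − P) b, H ((I − P) b)⟫ ≤ 0`; in particular
`inf_{a ∈ V} ⟪a − b, H (a − b)⟫ ≤ 0` for every `b ∈ E` (E-maximality of `V`). -/
theorem stmt17
    {E : Type*} [NormedAddCommGroup E] [InnerProductSpace ℝ E] [FiniteDimensional ℝ E]
    (H : E →ₗ[ℝ] E) (hsym : H.IsSymmetric)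
    (V : Submodule ℝ E)
    (hV : V = ⨆ (μ : ℝ) (_ : 0 < μ), Module.End.eigenspace (H : Module.End ℝ E) μ)
    (P : E → E)
    (hP : ∀ x : E, P x = (Submodule.orthogonalProjection V x : E)) :
    ∀ b : E,
      P b ∈ V ∧
      (∀ a ∈ V, ⟪P b - b, H (P b - b)⟫ ≤ ⟪a - b, H (a - b)⟫) ∧
      ⟪P b - b, H (P b - b)⟫ = ⟪b - P b, H (b - P b)⟫ ∧
      ⟪b - P b, H (b - P b)⟫ ≤ 0 := by
  change V = Module.End.positiveEigenspace H at hV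
  intro b
  have hPb : P b ∈ V := hP b ▸ V.starProjection_apply_mem b
  have hres : b - P b ∈ Vᗮ := hP b ▸ V.sub_starProjection_mem_orthogonal b
  have hres' : P b - b ∈ Vᗮ := by simpa using Vᗮ.neg_mem hres
  have hflip : ⟪P b - b, H (P b - b)⟫ = ⟪b - P b, H (b - P b)⟫ := by
    rw [← neg_sub b, map_neg, inner_neg_neg]
  refine ⟨hPb, fun a ha => ?_, hflip,
    hsym.inner_map_self_nonpos_of_mem_orthogonal_positiveEigenspace (hV ▸ hres)⟩
  have hdiff : a - P b ∈ V := V.sub_mem ha hPb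
  calc ⟪P b - b, H (P b - b)⟫
      ≤ ⟪a - P b, H (a - P b)⟫ + ⟪P b - b, H (P b - b)⟫ := by
        linarith [hsym.inner_map_self_nonneg_of_mem_positiveEigenspace (hV ▸ hdiff)]
    _ = ⟪a - b, H (a - b)⟫ := by
        rw [← hsym.inner_add_map_add_of_mem_orthogonal
          (hV ▸ fun _ => Module.End.map_mem_positiveEigenspace) hdiff hres', sub_add_sub_cancel]
end

section
/- Let (Ω, 𝓕, μ) be a probability space, E a finite-dimensional real inner product space, W : E × Ω → ℝ and G : E × Ω → E measurable, a⋆ : Ω → E measurable with G(a⋆(ω), ω) = 0 for all ω, a : Ω → E measurable, and x : E → E Borel measurable with x ∘ a bounded. Assume ω ↦ G(a(ω), ω) is μ-integrable and ω ↦ W(a(ω), ω) − W(a⋆(ω), ω) is μ-integrable, and that the conditional expectation of ω ↦ G(a(ω), ω) given the σ-algebra generated by a vanishes μ-a.e. Then ∫ ⟪x(a(ω)), G(a(ω), ω)⟫ dμ(ω) = 0, and consequently ∫ (W(a(ω), ω) − W(a⋆(ω), ω)) dμ(ω) = −∫ c(a(ω), ω) dμ(ω), where c(a, ω) = W(a⋆(ω),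 ω) − W(a, ω) + ⟪x(a), G(a, ω)⟫. -/
open MeasureTheory
open scoped RealInnerProductSpace

/-!
Since `x ∘ a` is bounded and `σ(a)`-measurable, it pulls out of the conditional expectation:
`E[⟪x(a), G(a, ·)⟫ | σ(a)] = ⟪x(a), E[G(a, ·) | σ(a)]⟫ = 0` a.e., and taking expectations gives
`∫ ⟪x(a), G(a, ·)⟫ dμ = 0`. The identity for the transport cost is then linearity of the integral.
-/

section InnerCondExp

variable {Ω E : Type*} {m mΩ : MeasurableSpace Ω} {μ : Measure Ω}
  [NormedAddCommGroup E] [InnerProductSpace ℝ E] {f g : Ω → E} {C : ℝ}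

theorem integrable_inner_of_bound (hf : AEStronglyMeasurable f μ)
    (hf_bound : ∀ᵐ ω ∂μ, ‖f ω‖ ≤ C) (hg : Integrable g μ) :
    Integrable (fun ω => ⟪f ω, g ω⟫) μ :=
  (innerSL ℝ (E := E)).integrable_of_bilin_of_bdd_left C hf hf_bound hg

theorem integral_inner_eq_zero_of_condExp_eq_zero [IsFiniteMeasure μ] [CompleteSpace E]
    (hm : m ≤ mΩ) (hf : StronglyMeasurable[m] f) (hf_bound : ∀ᵐ ω ∂μ, ‖f ω‖ ≤ C)
    (hg : Integrable g μ) (hcond : μ[g | m] =ᵐ[μ] 0) :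
    ∫ ω, ⟪f ω, g ω⟫ ∂μ = 0 := by
  have hpull : μ[fun ω => ⟪f ω, g ω⟫ | m] =ᵐ[μ] 0 := by
    filter_upwards [condExp_stronglyMeasurable_bilin_of_bound (innerSL ℝ) hm hf hg C hf_bound,
      hcond] with ω hω hω0
    exact hω.trans (by simp [hω0])
  rw [← integral_condExp hm, integral_congr_ae hpull, integral_zero']

end InnerCondExp

theorem stmt18_general
    {Ω : Type*} [MeasurableSpace Ω] (μ : Measure Ω) [IsProbabilityMeasure μ]
    {E : Type*} [NormedAddCommGroup E] [InnerProductSpace ℝ E] [FiniteDimensional ℝ E]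
    [MeasurableSpace E] [BorelSpace E]
    (W : E × Ω → ℝ)
    (G : E × Ω → E)
    (astar : Ω → E)
    (a : Ω → E) (ha : Measurable a)
    (x : E → E) (hx : Measurable x)
    (hxbdd : ∃ C : ℝ, ∀ ω : Ω, ‖x (a ω)‖ ≤ C)
    (hGint : Integrable (fun ω => G (a ω, ω)) μ)
    (hWint : Integrable (fun ω => W (a ω, ω) - W (astar ω, ω)) μ)
    (hcond : μ[(fun ω => G (a ω, ω)) | MeasurableSpace.comap a inferInstance]
      =ᵐ[μ] 0) :
    (∫ ω, ⟪x (a ω), G (a ω, ω)⟫ ∂μ = 0) ∧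
    ∫ ω, (W (a ω, ω) - W (astar ω, ω)) ∂μ
      = -∫ ω, (W (astar ω, ω) - W (a ω, ω) + ⟪x (a ω), G (a ω, ω)⟫) ∂μ := by
  obtain ⟨C, hC⟩ := hxbdd
  have hxa : StronglyMeasurable[MeasurableSpace.comap a inferInstance] (fun ω => x (a ω)) :=
    (hx.comp (comap_measurable a)).stronglyMeasurable
  have hC' : ∀ᵐ ω ∂μ, ‖x (a ω)‖ ≤ C := .of_forall hC
  have hinner_int := integrable_inner_of_bound (hxa.mono ha.comap_le).aestronglyMeasurable hC' hGint
  have hinner := integral_inner_eq_zero_of_condExp_eq_zero ha.comap_le hxa hC' hGint hcond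
  refine ⟨hinner, ?_⟩
  have hcost : (fun ω => W (astar ω, ω) - W (a ω, ω) + ⟪x (a ω), G (a ω, ω)⟫) =
      fun ω => ⟪x (a ω), G (a ω, ω)⟫ - (W (a ω, ω) - W (astar ω, ω)) := by
    funext ω; ring
  rw [hcost, integral_sub hinner_int hWint, hinner, zero_sub, neg_neg]

/-- **Gain from concealing information equals minus the expected transport cost.**
Let `a : Ω → E` be a policy whose induced actions satisfy the receivers' optimality conditions,
i.e. the conditional expectation of `ω ↦ G (a ω, ω)` given `σ(a)` vanishes a.e., let `astar` be
the full-revelation action (`G (astar ω, ω) = 0`), and let `x : E → E` be Borel shadow prices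
with `x ∘ a` bounded. Then `∫ ⟪x (a ω), G (a ω, ω)⟫ ∂μ = 0`, and hence
`∫ (W (a ω, ω) − W (astar ω, ω)) ∂μ = −∫ c (a ω, ω) ∂μ` for the information-transport cost
`c (a, ω) = W (astar ω, ω) − W (a, ω) + ⟪x a, G (a, ω)⟫`. -/
theorem stmt18
    {Ω : Type*} [MeasurableSpace Ω] (μ : Measure Ω) [IsProbabilityMeasure μ]
    {E : Type*} [NormedAddCommGroup E] [InnerProductSpace ℝ E] [FiniteDimensional ℝ E]
    [MeasurableSpace E] [BorelSpace E]
    (W : E × Ω → ℝ) (hW : Measurable W)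
    (G : E × Ω → E) (hG : Measurable G)
    (astar : Ω → E) (hastar : Measurable astar)
    (hzero : ∀ ω : Ω, G (astar ω, ω) = 0)
    (a : Ω → E) (ha : Measurable a)
    (x : E → E) (hx : Measurable x)
    (hxbdd : ∃ C : ℝ, ∀ ω : Ω, ‖x (a ω)‖ ≤ C)
    (hGint : Integrable (fun ω => G (a ω, ω)) μ)
    (hWint : Integrable (fun ω => W (a ω, ω) - W (astar ω, ω)) μ)
    (hcond : μ[(fun ω => G (a ω, ω)) | MeasurableSpace.comap a inferInstance]
      =ᵐ[μ] 0) :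
    (∫ ω, ⟪x (a ω), G (a ω, ω)⟫ ∂μ = 0) ∧
    ∫ ω, (W (a ω, ω) - W (astar ω, ω)) ∂μ
      = -∫ ω, (W (astar ω, ω) - W (a ω, ω) + ⟪x (a ω), G (a ω, ω)⟫) ∂μ :=
  stmt18_general μ W G astar a ha x hx hxbdd hGint hWint hcond
end
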